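/- arXiv:2410.12306 — 6 statements merged into one kernel-verified Lean document; each statement's English description precedes it below -/
import Mathlib

section
/- Fix an integer n ≥ 2 and reals vm < vM, and fix x ∈ ℝ. Define, for y ≤ x, W⁻(y) = (1/n)·(vM−vm)^{−n}·∫_{vm⁺(y)}^{vM} (v−y)·(v−vm⁺(y))^{n−1} dv, where vm⁺(y) = vm + (x−y)/(n−1). Then W⁻ has a left derivative at y = x (i.e., a derivative within the set (−∞,x]), and this left derivative equals −(1/(n(n−1)))·(x−vm)/(vM−vm). -/
/-!
Substituting `u = v - a` turns `∫_a^b (v - c) (v - a)^k dv` into a polynomial in `a`, `b`, `c`,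
so `W⁻` is an explicit polynomial in `y` and is differentiable at `x` (two-sidedly).
Differentiating the closed form with a lower limit `a(y)` of slope `a'` gives
`-(a' k + 1) (b - a)^(k+1)/(k+1) - a' (a - y) (b - a)^k`; for the slope `a' = -1/(n-1)` of
`vm⁺` the first term vanishes, and at `y = x`, where `vm⁺ = vm`, the second is
`(vm - x) (vM - vm)^(n-1) / (n-1)`.
-/

open MeasureTheory

theorem integral_sub_mul_sub_pow (a b c : ℝ) (k : ℕ) :
    ∫ v in a..b, (v - c) * (v - a) ^ k =
      (b - a) ^ (k + 2) / (k + 2) + (a - c) * (b - a) ^ (k + 1) / (k + 1) := by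
  have hsplit : ∀ v, (v - c) * (v - a) ^ k = (v - a) ^ (k + 1) + (a - c) * (v - a) ^ k :=
    fun v => by ring
  simp_rw [hsplit]
  rw [intervalIntegral.integral_add (Continuous.intervalIntegrable (by fun_prop) _ _)
      (Continuous.intervalIntegrable (by fun_prop) _ _),
    intervalIntegral.integral_const_mul,
    intervalIntegral.integral_comp_sub_right (· ^ (k + 1)),
    intervalIntegral.integral_comp_sub_right (· ^ k), integral_pow, integral_pow]
  push_cast
  ring

theorem HasDerivAt.integral_sub_mul_sub_pow {a : ℝ → ℝ} {a' y : ℝ} (b : ℝ) (k : ℕ)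
    (ha : HasDerivAt a a' y) :
    HasDerivAt (fun y => ∫ v in a y..b, (v - y) * (v - a y) ^ k)
      (-(a' * k + 1) * (b - a y) ^ (k + 1) / (k + 1) - a' * (a y - y) * (b - a y) ^ k) y := by
  simp_rw [_root_.integral_sub_mul_sub_pow]
  have hwidth := ha.const_sub b
  have hgap := ha.sub (hasDerivAt_id' y)
  refine (((hwidth.pow (k + 2)).div_const ((k : ℝ) + 2)).add
    ((hgap.mul (hwidth.pow (k + 1))).div_const ((k : ℝ) + 1))).congr_deriv ?_
  simp only [Pi.pow_apply, Pi.sub_apply]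
  field_simp
  push_cast
  ring

/-- In a first-price auction with `n` bidders and values uniform on `[vm, vM]`,
the payoff `W⁻(y)` of a deviator with parameter `y ≤ x` (the others using `x`)
has left derivative `-(1/(n(n-1))) (x - vm)/(vM - vm)` at `y = x`. -/
theorem leftDeriv_payoff_below (n : ℕ) (hn : 2 ≤ n) (vm vM : ℝ) (hv : vm < vM) (x : ℝ) :
    HasDerivWithinAt
      (fun y =>
        (1 / (n : ℝ)) * ((vM - vm) ^ n)⁻¹ *
          ∫ v in (vm + (x - y) / ((n : ℝ) - 1))..vM,
            (v - y) * (v - (vm + (x - y) / ((n : ℝ) - 1))) ^ (n - 1))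
      (-(1 / ((n : ℝ) * ((n : ℝ) - 1))) * ((x - vm) / (vM - vm)))
      (Set.Iic x) x := by
  obtain ⟨k, rfl⟩ : ∃ k, n = k + 1 := ⟨n - 1, by omega⟩
  have hk : (k : ℝ) ≠ 0 := by norm_cast; omega
  have hvne : vM - vm ≠ 0 := sub_ne_zero.2 hv.ne'
  have hlower : HasDerivAt (fun y => vm + (x - y) / (((k + 1 : ℕ) : ℝ) - 1)) (-1 / k) x := by
    refine (((hasDerivAt_id' x).const_sub x).div_const _).const_add vm |>.congr_deriv ?_
    push_cast; ring
  refine ((hlower.integral_sub_mul_sub_pow vM k).const_mul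
    ((1 / ((k + 1 : ℕ) : ℝ)) * ((vM - vm) ^ (k + 1))⁻¹)).hasDerivWithinAt.congr_deriv ?_
  have hslope : -1 / (k : ℝ) * k + 1 = 0 := by field_simp; ring
  push_cast
  rw [hslope]
  simp only [sub_self, zero_div, add_zero, add_sub_cancel_right]
  field_simp
  ring
end

section
/- Fix an integer n ≥ 2 and an integer K ≥ 2. Let (vm^(1), vM^(1)), …, (vm^(K), vM^(K)) be pairs of reals with vm^(k) < vM^(k) for each k, vm^(1) < ⋯ < vm^(K), and Δv^(1) < ⋯ < Δv^(K) where Δv^(k) = vM^(k) − vm^(k). Let (vm(t), vM(t)) be a piecewise-constant function of t ∈ [0,∞) taking values in {(vm^(k), vM^(k)) : 1 ≤ k ≤ K}, with finitely many switching times in each bounded interval, and let x : [0,∞) → ℝ be continuous, differentiable at every non-switching time, with x'(t) = −(1/(n(n−1)))·(x(t) − vm(t))/(vM(t) − vm(t)) there, and x(0) ∈ [vm^(1), vm^(K)]. Write Δv(t) = vM(t) − vm(t) and g = min_{1 ≤ k ≤ K−1} (Δv^(k+1) − Δv^(k)) > 0. Then there exists a constant C ≥ 0, independent of T, such that for all T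 > 0: ∫_0^T Δv(t)·x'(t) dt ≥ (g/2)·∫_0^T |x'(t)| dt − C. -/
/-! Take the potential `Ψ`, piecewise linear with slope `Δv^(j) + g/2` between `vm^(j)` and
`vm^(j+1)`. Between switches `x` relaxes exponentially towards the current `vm^(k)` without
overshooting it, so there `∫ Δv x' = Δv^(k) (x(b) - x(a))` and `∫ |x'| = |x(b) - x(a)|`. Because
the widths grow with `vm`, every slope of `Ψ` crossed while moving up towards `vm^(k)` is at most
`Δv^(k) - g/2`, and every one crossed while moving down is at least `Δv^(k) + g/2`; hence on each
piece `∫ Δv x' ≥ (g/2) ∫ |x'| + Ψ(x(b)) - Ψ(x(a))`. Summing over the pieces telescopes, and `Ψ` is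
bounded on `[vm^(1), vm^(K)]`, which `x` never leaves. -/

open MeasureTheory Set

/-- The continuous piecewise-linear function vanishing on `(-∞, v 0]`, with slope `w j` on
`[v j, v (j + 1)]` and constant on `[v N, ∞)`. -/
noncomputable def segmentPotential (v w : ℕ → ℝ) (N : ℕ) (y : ℝ) : ℝ :=
  ∑ j ∈ Finset.range N, w j * (min y (v (j + 1)) - min y (v j))

/-- For `p ≤ q` and `a ≤ b`, the length of `[p, q] ∩ [a, b]`. -/
def overlapLength (p q a b : ℝ) : ℝ :=
  min q b - min p b - (min q a - min p a)

section overlapLength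

variable {a b p q : ℝ}

theorem overlapLength_nonneg (hab : a ≤ b) (hpq : p ≤ q) : 0 ≤ overlapLength p q a b := by
  simp only [overlapLength, min_def]; split_ifs <;> linarith

theorem overlapLength_eq_zero_of_le_left (hab : a ≤ b) (hpq : p ≤ q) (hq : q ≤ a) :
    overlapLength p q a b = 0 := by
  simp only [overlapLength, min_def]; split_ifs <;> linarith

theorem overlapLength_eq_zero_of_right_le (hab : a ≤ b) (hpq : p ≤ q) (hp : b ≤ p) :
    overlapLength p q a b = 0 := by
  simp only [overlapLength, min_def]; split_ifs <;> linarith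

end overlapLength

theorem MonotoneOn.le_add_one_of_mem_range {v : ℕ → ℝ} {N j : ℕ} (hv : MonotoneOn v (Icc 0 N))
    (hj : j ∈ Finset.range N) : v j ≤ v (j + 1) := by
  have := Finset.mem_range.1 hj
  exact hv ⟨Nat.zero_le _, by omega⟩ ⟨Nat.zero_le _, by omega⟩ (by omega)

namespace segmentPotential

variable {v w : ℕ → ℝ} {N : ℕ}

theorem nonneg (hv : MonotoneOn v (Icc 0 N)) (hw : ∀ j < N, 0 ≤ w j) (y : ℝ) :
    0 ≤ segmentPotential v w N y :=
  Finset.sum_nonneg fun j hj => mul_nonneg (hw j (Finset.mem_range.1 hj))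
    (sub_nonneg.2 (min_le_min_left y (hv.le_add_one_of_mem_range hj)))

theorem le_sum (hv : MonotoneOn v (Icc 0 N)) (hw : ∀ j < N, 0 ≤ w j) (y : ℝ) :
    segmentPotential v w N y ≤ ∑ j ∈ Finset.range N, w j * (v (j + 1) - v j) := by
  refine Finset.sum_le_sum fun j hj => mul_le_mul_of_nonneg_left ?_ (hw j (Finset.mem_range.1 hj))
  have := hv.le_add_one_of_mem_range hj
  simp only [min_def]; split_ifs <;> linarith

theorem sub_eq_sum_overlapLength (p q : ℝ) :
    segmentPotential v w N q - segmentPotential v w N p =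
      ∑ j ∈ Finset.range N, w j * overlapLength p q (v j) (v (j + 1)) := by
  simp only [segmentPotential, overlapLength, ← Finset.sum_sub_distrib]
  exact Finset.sum_congr rfl fun j _ => by ring

theorem sum_overlapLength {p q : ℝ} (hp : p ∈ Icc (v 0) (v N)) (hq : q ∈ Icc (v 0) (v N)) :
    ∑ j ∈ Finset.range N, overlapLength p q (v j) (v (j + 1)) = q - p := by
  simp only [overlapLength]
  rw [Finset.sum_range_sub (fun j => min q (v j) - min p (v j)), min_eq_left hq.2,
    min_eq_left hp.2, min_eq_right hq.1, min_eq_right hp.1]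
  ring

variable {p q c : ℝ}

theorem sub_le_mul (hv : MonotoneOn v (Icc 0 N)) (hpq : p ≤ q) (hp : p ∈ Icc (v 0) (v N))
    (hq : q ∈ Icc (v 0) (v N)) (hc : ∀ j < N, v j < q → w j ≤ c) :
    segmentPotential v w N q - segmentPotential v w N p ≤ c * (q - p) := by
  rw [sub_eq_sum_overlapLength, ← sum_overlapLength hp hq, Finset.mul_sum]
  refine Finset.sum_le_sum fun j hj => ?_
  have hvj := hv.le_add_one_of_mem_range hj
  rcases le_or_gt q (v j) with hqj | hqj
  · simp [overlapLength_eq_zero_of_le_left hvj hpq hqj]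
  · exact mul_le_mul_of_nonneg_right (hc j (Finset.mem_range.1 hj) hqj)
      (overlapLength_nonneg hvj hpq)

theorem mul_le_sub (hv : MonotoneOn v (Icc 0 N)) (hpq : p ≤ q) (hp : p ∈ Icc (v 0) (v N))
    (hq : q ∈ Icc (v 0) (v N)) (hc : ∀ j < N, p < v (j + 1) → c ≤ w j) :
    c * (q - p) ≤ segmentPotential v w N q - segmentPotential v w N p := by
  rw [sub_eq_sum_overlapLength, ← sum_overlapLength hp hq, Finset.mul_sum]
  refine Finset.sum_le_sum fun j hj => ?_
  have hvj := hv.le_add_one_of_mem_range hj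
  rcases le_or_gt (v (j + 1)) p with hpj | hpj
  · simp [overlapLength_eq_zero_of_right_le hvj hpq hpj]
  · exact mul_le_mul_of_nonneg_right (hc j (Finset.mem_range.1 hj) hpj)
      (overlapLength_nonneg hvj hpq)

theorem sub_le_of_mem_uIcc {Δ : ℕ → ℝ} {g : ℝ} {k : ℕ} (hv : MonotoneOn v (Icc 0 N))
    (hΔ : ∀ j < N, Δ j + g ≤ Δ (j + 1)) (hg : 0 ≤ g) (hk : k ≤ N)
    (hp : p ∈ Icc (v 0) (v N)) (hq : q ∈ uIcc p (v k)) :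
    segmentPotential v (fun j => Δ j + g / 2) N q - segmentPotential v (fun j => Δ j + g / 2) N p
      ≤ Δ k * (q - p) - g / 2 * |q - p| := by
  have hkN : k ∈ Icc 0 N := ⟨Nat.zero_le k, hk⟩
  have hqI : q ∈ Icc (v 0) (v N) := uIcc_subset_Icc hp (hv.mapsTo_Icc hkN) hq
  have hΔmono : MonotoneOn Δ (Icc 0 N) := monotoneOn_of_le_add_one ordConnected_Icc
    fun j _ _ hj => by linarith [hΔ j hj.2]
  rcases le_total p (v k) with hpk | hkp
  · rw [uIcc_of_le hpk] at hq
    have hw : ∀ j < N, v j < q → Δ j + g / 2 ≤ Δ k - g / 2 := fun j hj hjq => by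
      have hjk : j + 1 ≤ k := by
        by_contra! hkj
        exact (hq.2.trans (hv hkN ⟨Nat.zero_le _, by omega⟩ (by omega))).not_gt hjq
      linarith [hΔ j hj, hΔmono ⟨Nat.zero_le _, by omega⟩ hkN hjk]
    have := sub_le_mul hv hq.1 hp hqI hw
    rw [abs_of_nonneg (sub_nonneg.2 hq.1)]
    linarith
  · rw [uIcc_of_ge hkp] at hq
    have hw : ∀ j < N, q < v (j + 1) → Δ k + g / 2 ≤ Δ j + g / 2 := fun j hj hqj => by
      have hkj : k ≤ j := by
        by_contra! hjk
        exact (hq.1.trans' (hv ⟨Nat.zero_le _, by omega⟩ hkN (by omega))).not_gt hqj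
      linarith [hΔmono hkN ⟨Nat.zero_le _, by omega⟩ hkj]
    have := mul_le_sub hv hq.2 hqI hp hw
    rw [abs_of_nonpos (sub_nonpos.2 hq.2)]
    linarith

end segmentPotential

theorem integral_abs_eq_abs_sub_of_hasDerivAt {f f' : ℝ → ℝ} {a b : ℝ} (hab : a ≤ b)
    (hf : ContinuousOn f (Icc a b)) (hderiv : ∀ t ∈ Ioo a b, HasDerivAt f (f' t) t)
    (hint : IntervalIntegrable f' volume a b)
    (hsign : (∀ t ∈ Ioo a b, 0 ≤ f' t) ∨ ∀ t ∈ Ioo a b, f' t ≤ 0) :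
    ∫ t in a..b, |f' t| = |f b - f a| := by
  have habs : ∫ t in a..b, |f' t| = ∫ t in a..b, f' t ∨
      ∫ t in a..b, |f' t| = -∫ t in a..b, f' t := by
    rcases hsign with h | h
    · exact .inl (intervalIntegral.integral_congr_Ioo_of_le hab fun t ht => abs_of_nonneg (h t ht))
    · refine .inr ?_
      rw [← intervalIntegral.integral_neg]
      exact intervalIntegral.integral_congr_Ioo_of_le hab fun t ht => abs_of_nonpos (h t ht)
  calc ∫ t in a..b, |f' t| = |(∫ t in a..b, |f' t|)| :=
        (abs_of_nonneg (intervalIntegral.integral_nonneg hab fun t _ => abs_nonneg _)).symm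
    _ = |∫ t in a..b, f' t| := by rcases habs with h | h <;> rw [h]; exact abs_neg _
    _ = |f b - f a| := by rw [intervalIntegral.integral_eq_sub_of_hasDerivAt_of_le hab hf hderiv hint]

section Relaxation

variable {x x' : ℝ → ℝ} {a b θ v : ℝ}

theorem sub_eq_exp_mul_of_hasDerivAt_eq_neg_mul_sub (hx : ContinuousOn x (Icc a b))
    (hderiv : ∀ t ∈ Ioo a b, HasDerivAt x (x' t) t)
    (hode : ∀ t ∈ Ioo a b, x' t = -θ * (x t - v)) {t : ℝ} (ht : t ∈ Icc a b) :
    x t - v = Real.exp (-θ * (t - a)) * (x a - v) := by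
  -- `exp (θ (s - a)) (x s - v)` has derivative zero
  set y : ℝ → ℝ := fun s => Real.exp (θ * (s - a)) * (x s - v)
  have hy : y t = y a := by
    rcases ht.1.eq_or_lt with rfl | hat
    · rfl
    have hycont : ContinuousOn y (Icc a t) :=
      (Continuous.continuousOn (by fun_prop)).mul
        ((hx.mono (Icc_subset_Icc_right ht.2)).sub continuousOn_const)
    have hyderiv : ∀ s ∈ Ioo a t, HasDerivAt y 0 s := fun s hs => by
      have hs' : s ∈ Ioo a b := ⟨hs.1, hs.2.trans_le ht.2⟩
      have hexp : HasDerivAt (fun s => Real.exp (θ * (s - a))) (Real.exp (θ * (s - a)) * θ) s := by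
        simpa using ((hasDerivAt_id s).sub_const a).const_mul θ |>.exp
      exact (hexp.mul ((hderiv s hs').sub_const v)).congr_deriv (by rw [hode s hs']; ring)
    obtain ⟨c, -, hc⟩ := exists_hasDerivAt_eq_slope y (fun _ => 0) hat hycont hyderiv
    rw [eq_comm, div_eq_zero_iff, sub_eq_zero] at hc
    exact hc.resolve_right (sub_ne_zero.2 hat.ne')
  simp only [y, sub_self, mul_zero, Real.exp_zero, one_mul] at hy
  rw [← hy, ← mul_assoc, ← Real.exp_add]
  simp

theorem mem_uIcc_of_hasDerivAt_eq_neg_mul_sub (hθ : 0 ≤ θ) (hab : a ≤ b)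
    (hx : ContinuousOn x (Icc a b)) (hderiv : ∀ t ∈ Ioo a b, HasDerivAt x (x' t) t)
    (hode : ∀ t ∈ Ioo a b, x' t = -θ * (x t - v)) :
    x b ∈ uIcc (x a) v := by
  have hxb := sub_eq_exp_mul_of_hasDerivAt_eq_neg_mul_sub hx hderiv hode (right_mem_Icc.2 hab)
  have hμ₀ := Real.exp_pos (-θ * (b - a))
  have hμ₁ : Real.exp (-θ * (b - a)) ≤ 1 :=
    Real.exp_le_one_iff.2 (by nlinarith [sub_nonneg.2 hab])
  rcases le_total (x a) v with h | h
  · rw [uIcc_of_le h]; constructor <;> nlinarith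
  · rw [uIcc_of_ge h]; constructor <;> nlinarith

theorem intervalIntegrable_of_eq_neg_mul_sub (hab : a ≤ b) (hx : ContinuousOn x (Icc a b))
    (hode : ∀ t ∈ Ioo a b, x' t = -θ * (x t - v)) :
    IntervalIntegrable x' volume a b := by
  refine IntervalIntegrable.congr_uIoo (f := fun t => -θ * (x t - v)) ?_ ?_
  · exact (continuousOn_const.mul (hx.sub continuousOn_const)).intervalIntegrable_of_Icc hab
  · rw [uIoo_of_le hab]; exact fun t ht => (hode t ht).symm

theorem integral_abs_of_hasDerivAt_eq_neg_mul_sub (hab : a ≤ b)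
    (hx : ContinuousOn x (Icc a b)) (hderiv : ∀ t ∈ Ioo a b, HasDerivAt x (x' t) t)
    (hode : ∀ t ∈ Ioo a b, x' t = -θ * (x t - v)) :
    ∫ t in a..b, |x' t| = |x b - x a| := by
  refine integral_abs_eq_abs_sub_of_hasDerivAt hab hx hderiv
    (intervalIntegrable_of_eq_neg_mul_sub hab hx hode) ?_
  have hx' : ∀ t ∈ Ioo a b, x' t = -θ * (x a - v) * Real.exp (-θ * (t - a)) := fun t ht => by
    rw [hode t ht, sub_eq_exp_mul_of_hasDerivAt_eq_neg_mul_sub hx hderiv hode (Ioo_subset_Icc_self ht)]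
    ring
  rcases le_total 0 (-θ * (x a - v)) with h | h
  · exact .inl fun t ht => hx' t ht ▸ mul_nonneg h (Real.exp_pos _).le
  · exact .inr fun t ht => hx' t ht ▸ mul_nonpos_of_nonpos_of_nonneg h (Real.exp_pos _).le

end Relaxation

theorem IsPreconnected.apply_eq_of_eventually_eq {α β : Type*} [TopologicalSpace α] {f : α → β}
    {s : Set α} (hs : IsPreconnected s) (hf : ∀ t ∈ s, ∀ᶠ u in nhds t, f u = f t)
    {t u : α} (ht : t ∈ s) (hu : u ∈ s) : f t = f u :=
  hs.induction₂ (fun t u => f t = f u)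
    (fun t ht => ((hf t ht).filter_mono nhdsWithin_le_nhds).mono fun _ h => h.symm)
    (fun _ _ _ _ _ _ => Eq.trans) (fun _ _ _ _ => Eq.symm) ht hu

theorem forall_of_propagates_across_breaks {S : Set ℝ} (hS : ∀ T : ℝ, (S ∩ Icc 0 T).Finite)
    {P : ℝ → Prop} (h₀ : P 0)
    (hstep : ∀ a b : ℝ, 0 ≤ a → a < b → S ∩ Ioo a b = ∅ → P a → P b) :
    ∀ T, 0 ≤ T → P T := by
  classical
  intro T hT
  rcases hT.eq_or_lt with rfl | hT
  · exact h₀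
  suffices ∀ s : Finset ℝ, ∀ T, 0 < T → S ∩ Ioo 0 T = ↑s → P T from
    this ((hS T).subset (inter_subset_inter_right S Ioo_subset_Icc_self)).toFinset T hT (by simp)
  intro s
  induction s using Finset.induction_on_max with
  | empty => exact fun T hT hST => hstep 0 T le_rfl hT (by simpa using hST) h₀
  | insert m s hlt ih =>
    intro T hT hST
    have hm : m ∈ S ∩ Ioo 0 T := hST ▸ Finset.mem_insert_self m s
    have hSm : S ∩ Ioo 0 m = ↑s := by
      ext t
      constructor
      · rintro ⟨htS, ht0, htm⟩
        have : t ∈ insert m s := by rw [← Finset.mem_coe, ← hST]; exact ⟨htS, ht0, htm.trans hm.2.2⟩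
        exact (Finset.mem_insert.1 this).resolve_left htm.ne
      · intro ht
        have : t ∈ S ∩ Ioo 0 T := hST ▸ Finset.mem_insert_of_mem ht
        exact ⟨this.1, this.2.1, hlt t ht⟩
    refine hstep m T hm.2.1.le hm.2.2 ?_ (ih m hm.2.1 hSm)
    refine eq_empty_of_forall_notMem fun t ⟨htS, hmt, htT⟩ => ?_
    have : t ∈ insert m s := by rw [← Finset.mem_coe, ← hST]; exact ⟨htS, hm.2.1.trans hmt, htT⟩
    rcases Finset.mem_insert.1 this with rfl | ht
    · exact hmt.ne rfl
    · exact (hlt t ht).not_gt hmt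

theorem exists_state_relaxation_of_no_switch {n K : ℕ} {vmk vMk : ℕ → ℝ} {vm vM x xd : ℝ → ℝ}
    {S : Set ℝ} {a b : ℝ}
    (hlt : ∀ k < K, vmk k < vMk k)
    (hstate : ∀ t, 0 ≤ t → ∃ k < K, vm t = vmk k ∧ vM t = vMk k)
    (hpc : ∀ t, 0 ≤ t → t ∉ S → ∀ᶠ s in nhds t, vm s = vm t ∧ vM s = vM t)
    (hx : ContinuousOn x (Icc a b))
    (hode : ∀ t, 0 ≤ t → t ∉ S → HasDerivAt x (xd t) t)
    (hform : ∀ t, 0 ≤ t → t ∉ S →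
      xd t = -(1 / ((n : ℝ) * ((n : ℝ) - 1))) * ((x t - vm t) / (vM t - vm t)))
    (ha : 0 ≤ a) (hab : a < b) (hS : S ∩ Ioo a b = ∅) :
    ∃ k < K, x b ∈ uIcc (x a) (vmk k) ∧
      IntervalIntegrable (fun t => |xd t|) volume a b ∧
      IntervalIntegrable (fun t => (vM t - vm t) * xd t) volume a b ∧
      ∫ t in a..b, |xd t| = |x b - x a| ∧
      ∫ t in a..b, (vM t - vm t) * xd t = (vMk k - vmk k) * (x b - x a) := by
  have hreg : ∀ t ∈ Ioo a b, 0 ≤ t ∧ t ∉ S := fun t ht =>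
    ⟨ha.trans ht.1.le, fun htS => eq_empty_iff_forall_notMem.1 hS t ⟨htS, ht⟩⟩
  have hmid : (a + b) / 2 ∈ Ioo a b := ⟨by linarith, by linarith⟩
  obtain ⟨k, hk, hvm, hvM⟩ := hstate _ (hreg _ hmid).1
  have henv : ∀ t ∈ Ioo a b, vm t = vmk k ∧ vM t = vMk k := fun t ht => by
    have := isPreconnected_Ioo.apply_eq_of_eventually_eq (f := fun t => (vm t, vM t))
      (fun t ht => (hpc t (hreg t ht).1 (hreg t ht).2).mono fun _ h => Prod.ext h.1 h.2) ht hmid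
    simp only [Prod.mk.injEq, hvm, hvM] at this
    exact this
  have hθ : 0 ≤ 1 / ((n : ℝ) * ((n : ℝ) - 1)) / (vMk k - vmk k) := by
    refine div_nonneg (one_div_nonneg.2 ?_) (sub_pos.2 (hlt k hk)).le
    rcases n.eq_zero_or_pos with rfl | hn
    · simp
    · exact mul_nonneg n.cast_nonneg (sub_nonneg.2 (Nat.one_le_cast.2 hn))
  have hderiv : ∀ t ∈ Ioo a b, HasDerivAt x (xd t) t := fun t ht =>
    hode t (hreg t ht).1 (hreg t ht).2
  have hrelax : ∀ t ∈ Ioo a b,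
      xd t = -(1 / ((n : ℝ) * ((n : ℝ) - 1)) / (vMk k - vmk k)) * (x t - vmk k) := fun t ht => by
    rw [hform t (hreg t ht).1 (hreg t ht).2, (henv t ht).1, (henv t ht).2]
    ring
  have hint := intervalIntegrable_of_eq_neg_mul_sub hab.le hx hrelax
  have hwidth : EqOn (fun t => (vMk k - vmk k) * xd t) (fun t => (vM t - vm t) * xd t) (Ioo a b) :=
    fun t ht => by simp only [(henv t ht).1, (henv t ht).2]
  refine ⟨k, hk, mem_uIcc_of_hasDerivAt_eq_neg_mul_sub hθ hab.le hx hderiv hrelax, hint.abs,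
    (hint.const_mul _).congr_uIoo (uIoo_of_le hab.le ▸ hwidth),
    integral_abs_of_hasDerivAt_eq_neg_mul_sub hab.le hx hderiv hrelax, ?_⟩
  rw [← intervalIntegral.integral_congr_Ioo_of_le hab.le hwidth, intervalIntegral.integral_const_mul,
    intervalIntegral.integral_eq_sub_of_hasDerivAt_of_le hab.le hx hderiv hint]

theorem le_integral_of_propagates_across_breaks {S : Set ℝ} (hS : ∀ T : ℝ, (S ∩ Icc 0 T).Finite)
    {x xd D Ψ : ℝ → ℝ} {B : Set ℝ} {c : ℝ} (hx₀ : x 0 ∈ B)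
    (hpiece : ∀ a b : ℝ, 0 ≤ a → a < b → S ∩ Ioo a b = ∅ → x a ∈ B →
      x b ∈ B ∧ IntervalIntegrable (fun t => |xd t|) volume a b ∧
        IntervalIntegrable (fun t => D t * xd t) volume a b ∧
        c * (∫ t in a..b, |xd t|) + (Ψ (x b) - Ψ (x a)) ≤ ∫ t in a..b, D t * xd t)
    {T : ℝ} (hT : 0 ≤ T) :
    c * (∫ t in (0:ℝ)..T, |xd t|) + (Ψ (x T) - Ψ (x 0)) ≤ ∫ t in (0:ℝ)..T, D t * xd t := by
  suffices ∀ T, 0 ≤ T → x T ∈ B ∧ IntervalIntegrable (fun t => |xd t|) volume 0 T ∧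
      IntervalIntegrable (fun t => D t * xd t) volume 0 T ∧
      c * (∫ t in (0:ℝ)..T, |xd t|) + (Ψ (x T) - Ψ (x 0)) ≤ ∫ t in (0:ℝ)..T, D t * xd t from
    (this T hT).2.2.2
  refine forall_of_propagates_across_breaks hS (by simpa using hx₀) ?_
  rintro a b ha hab hS ⟨hxa, hint₁, hint₂, hineq⟩
  obtain ⟨hxb, hint₁', hint₂', hineq'⟩ := hpiece a b ha hab hS hxa
  refine ⟨hxb, hint₁.trans hint₁', hint₂.trans hint₂', ?_⟩
  rw [← intervalIntegral.integral_add_adjacent_intervals hint₁ hint₁',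
    ← intervalIntegral.integral_add_adjacent_intervals hint₂ hint₂', mul_add]
  linarith

theorem revenue_gap_lower_bound_general (n K : ℕ)
    (vmk vMk : ℕ → ℝ)
    (hlt : ∀ k < K, vmk k < vMk k)
    (hmono : ∀ k, k + 1 < K → vmk k < vmk (k + 1))
    (hDmono : ∀ k, k + 1 < K → vMk k - vmk k < vMk (k + 1) - vmk (k + 1))
    (vm vM : ℝ → ℝ)
    (hstate : ∀ t, 0 ≤ t → ∃ k < K, vm t = vmk k ∧ vM t = vMk k)
    (S : Set ℝ)
    (hSfin : ∀ T : ℝ, (S ∩ Set.Icc 0 T).Finite)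
    (hpc : ∀ t, 0 ≤ t → t ∉ S → ∀ᶠ s in nhds t, vm s = vm t ∧ vM s = vM t)
    (x xd : ℝ → ℝ)
    (hx : ContinuousOn x (Set.Ici 0))
    (hode : ∀ t, 0 ≤ t → t ∉ S → HasDerivAt x (xd t) t)
    (hform : ∀ t, 0 ≤ t → t ∉ S →
      xd t = -(1 / ((n : ℝ) * ((n : ℝ) - 1))) * ((x t - vm t) / (vM t - vm t)))
    (hx0 : x 0 ∈ Set.Icc (vmk 0) (vmk (K - 1)))
    (g : ℝ)
    (hg : IsLeast ((fun k => (vMk (k + 1) - vmk (k + 1)) - (vMk k - vmk k)) ''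
      {k | k + 1 < K}) g) :
    0 < g ∧ ∃ C, 0 ≤ C ∧ ∀ T > (0 : ℝ),
      g / 2 * (∫ t in (0:ℝ)..T, |xd t|) - C ≤ ∫ t in (0:ℝ)..T, (vM t - vm t) * xd t := by
  obtain ⟨⟨k₀, hk₀, hgk₀⟩, hgap⟩ := hg
  have hg : 0 < g := hgk₀ ▸ sub_pos.2 (hDmono k₀ hk₀)
  have hv : MonotoneOn vmk (Icc 0 (K - 1)) := monotoneOn_of_le_add_one ordConnected_Icc
    fun j _ _ hj => (hmono j (by have := hj.2; omega)).le
  have hΔ : ∀ j < K - 1, vMk j - vmk j + g ≤ vMk (j + 1) - vmk (j + 1) := fun j hj => by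
    have : g ≤ _ := hgap ⟨j, show j + 1 < K by omega, rfl⟩
    linarith
  have hw : ∀ j < K - 1, 0 ≤ vMk j - vmk j + g / 2 := fun j hj => by
    linarith [hlt j (by omega)]
  refine ⟨hg, _, (segmentPotential.nonneg hv hw (x 0)).trans (segmentPotential.le_sum hv hw (x 0)),
    fun T hT => ?_⟩
  have key := le_integral_of_propagates_across_breaks hSfin (xd := xd) (D := fun t => vM t - vm t)
    (Ψ := segmentPotential vmk (fun j => vMk j - vmk j + g / 2) (K - 1)) (c := g / 2) hx0 ?_ hT.le
  · linarith [segmentPotential.nonneg hv hw (x T), segmentPotential.le_sum hv hw (x 0)]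
  intro a b ha hab hS hxa
  obtain ⟨k, hk, hxb, hint₁, hint₂, habs, hwidth⟩ := exists_state_relaxation_of_no_switch
    hlt hstate hpc (hx.mono fun t ht => ha.trans ht.1) hode hform ha hab hS
  refine ⟨uIcc_subset_Icc hxa (hv.mapsTo_Icc ⟨Nat.zero_le k, by omega⟩) hxb, hint₁, hint₂, ?_⟩
  rw [habs, hwidth]
  linarith [segmentPotential.sub_le_of_mem_uIcc hv hΔ hg.le (by omega) hxa hxb]

/-- Finite-time lower bound behind revenue inequivalence when the interval width
`Δv^(k) = vM^(k) - vm^(k)` increases with `k`: along the adaptive dynamics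
`x' = -(1/(n(n-1))) (x - vm(t))/(vM(t) - vm(t))` in a piecewise-constant
`K`-state environment, with `g` the minimum gap of consecutive widths,
`∫_0^T Δv(t) x'(t) dt ≥ (g/2) ∫_0^T |x'(t)| dt - C` for a constant `C`
independent of `T` (and `g > 0`). -/
theorem revenue_gap_lower_bound (n K : ℕ) (hn : 2 ≤ n) (hK : 2 ≤ K)
    (vmk vMk : ℕ → ℝ)
    (hlt : ∀ k < K, vmk k < vMk k)
    (hmono : ∀ k, k + 1 < K → vmk k < vmk (k + 1))
    (hDmono : ∀ k, k + 1 < K → vMk k - vmk k < vMk (k + 1) - vmk (k + 1))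
    (vm vM : ℝ → ℝ)
    (hstate : ∀ t, 0 ≤ t → ∃ k < K, vm t = vmk k ∧ vM t = vMk k)
    (S : Set ℝ)
    (hSfin : ∀ T : ℝ, (S ∩ Set.Icc 0 T).Finite)
    (hpc : ∀ t, 0 ≤ t → t ∉ S → ∀ᶠ s in nhds t, vm s = vm t ∧ vM s = vM t)
    (x xd : ℝ → ℝ)
    (hx : ContinuousOn x (Set.Ici 0))
    (hode : ∀ t, 0 ≤ t → t ∉ S → HasDerivAt x (xd t) t)
    (hform : ∀ t, 0 ≤ t → t ∉ S →
      xd t = -(1 / ((n : ℝ) * ((n : ℝ) - 1))) * ((x t - vm t) / (vM t - vm t)))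
    (hx0 : x 0 ∈ Set.Icc (vmk 0) (vmk (K - 1)))
    (g : ℝ)
    (hg : IsLeast ((fun k => (vMk (k + 1) - vmk (k + 1)) - (vMk k - vmk k)) ''
      {k | k + 1 < K}) g) :
    0 < g ∧ ∃ C, 0 ≤ C ∧ ∀ T > (0 : ℝ),
      g / 2 * (∫ t in (0:ℝ)..T, |xd t|) - C ≤ ∫ t in (0:ℝ)..T, (vM t - vm t) * xd t :=
  revenue_gap_lower_bound_general n K vmk vMk hlt hmono hDmono vm vM hstate S hSfin hpc x xd hx hode
    hform hx0 g hg
end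

section
/- Fix an integer n ≥ 2 and an integer K ≥ 2. Let (vm^(1), vM^(1)), …, (vm^(K), vM^(K)) be pairs of reals with vm^(k) < vM^(k) for each k, vm^(1) < ⋯ < vm^(K), and Δv^(1) > ⋯ > Δv^(K) where Δv^(k) = vM^(k) − vm^(k). Let (vm(t), vM(t)) be a piecewise-constant function of t ∈ [0,∞) taking values in {(vm^(k), vM^(k)) : 1 ≤ k ≤ K}, with finitely many switching times in each bounded interval, and let x : [0,∞) → ℝ be continuous, differentiable at every non-switching time, with x'(t) = −(1/(n(n−1)))·(x(t) − vm(t))/(vM(t) − vm(t)) there, and x(0) ∈ [vm^(1), vm^(K)]. Write Δv(t) = vM(t) − vm(t) and g = min_{1 ≤ k ≤ K−1} (Δv^(k) − Δv^(k+1)) > 0. Then there exists a constant C ≥ 0, independent of T, such that for all T > 0: ∫_0^T Δv(t)·x'(t) dt ≤ −(g/2)·∫_0^T |x'(t)| dt + C. -/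
/-!
Let `g` be the smallest drop between consecutive widths `Δv^(k) = vM^(k) - vm^(k)`, and let `ψ` be
the step function equal to `Δv^(j) - g/2` on `(vm^(j), vm^(j+1)]` and to `Δv^(1) + g/2` left of
`vm^(1)`. Since the widths drop by at least `g` from one state to the next, `ψ` is antitone,
`ψ ≤ Δv^(k) - g/2` right of `vm^(k)` and `ψ ≥ Δv^(k) + g/2` left of it. The dynamics move `x`
towards `vm(t)`, so `x' < 0` only when `x > vm(t)` and `x' > 0` only when `x < vm(t)`; hence the
potential `Φ = ∫ ψ` satisfies `(d/dt)⁺ Φ(x(t)) ≥ Δv(t) x'(t) + (g/2) |x'(t)|` at every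
non-switching time. Integrating over `[0, T]` bounds `∫ Δv x' + (g/2) ∫ |x'|` by
`Φ(x(T)) - Φ(x(0))`, which is at most `(Δv^(1) + g/2) (vm^(K) - vm^(1))` because `Φ` is Lipschitz
and `x` never leaves `[vm^(1), vm^(K)]`.
-/

open MeasureTheory Set Filter Topology

section Calculus

variable {F φ : ℝ → ℝ} {a b : ℝ}

theorem integral_le_sub_of_hasDerivWithinAt_Ioi_off_finite {S : Set ℝ} (hS : S.Finite)
    (hab : a ≤ b) (hF : ContinuousOn F (Icc a b)) (hφ : IntegrableOn φ (Icc a b))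
    (hd : ∀ t ∈ Ioo a b \ S, ∃ d, HasDerivWithinAt F d (Ioi t) t ∧ φ t ≤ d) :
    ∫ t in a..b, φ t ≤ F b - F a := by
  induction S, hS using Set.Finite.induction_on generalizing a b with
  | empty =>
    choose! d hd using hd
    exact intervalIntegral.integral_le_sub_of_hasDeriv_right_of_le hab hF
      (fun t ht => (hd t ⟨ht, id⟩).1) hφ (fun t ht => (hd t ⟨ht, id⟩).2)
  | @insert s S _ _ ih =>
    by_cases hs : s ∈ Ioo a b
    · have hleft : Icc a s ⊆ Icc a b := Icc_subset_Icc_right hs.2.le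
      have hright : Icc s b ⊆ Icc a b := Icc_subset_Icc_left hs.1.le
      rw [← intervalIntegral.integral_add_adjacent_intervals
        ((intervalIntegrable_iff_integrableOn_Icc_of_le hs.1.le).2 (hφ.mono_set hleft))
        ((intervalIntegrable_iff_integrableOn_Icc_of_le hs.2.le).2 (hφ.mono_set hright))]
      have h₁ := ih hs.1.le (hF.mono hleft) (hφ.mono_set hleft) fun t ht =>
        hd t ⟨⟨ht.1.1, ht.1.2.trans hs.2⟩, by rintro (rfl | h); exacts [ht.1.2.ne rfl, ht.2 h]⟩
      have h₂ := ih hs.2.le (hF.mono hright) (hφ.mono_set hright) fun t ht =>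
        hd t ⟨⟨hs.1.trans ht.1.1, ht.1.2⟩, by rintro (rfl | h); exacts [ht.1.1.ne rfl, ht.2 h]⟩
      linarith
    · exact ih hab hF hφ fun t ht =>
        hd t ⟨ht.1, by rintro (rfl | h); exacts [hs ht.1, ht.2 h]⟩

theorem le_of_hasDerivWithinAt_Ioi_nonpos_of_gt {S : Set ℝ} (hS : ∀ T, (S ∩ Icc a T).Finite)
    {M : ℝ} (hF : ContinuousOn F (Ici a)) (ha : F a ≤ M)
    (hd : ∀ t, a < t → t ∉ S → M < F t → ∃ d ≤ 0, HasDerivWithinAt F d (Ioi t) t)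
    (hb : a ≤ b) : F b ≤ M := by
  by_contra! hMb
  -- `sSup A` is the last time at which `F ≤ M`; after it `F > M`, so `F` cannot increase.
  have hFc : ContinuousOn F (Icc a b) := hF.mono Icc_subset_Ici_self
  set A := Icc a b ∩ F ⁻¹' Iic M
  have hAbdd : BddAbove A := ⟨b, fun u hu => hu.1.2⟩
  have hsA : sSup A ∈ A :=
    (hFc.preimage_isClosed_of_isClosed isClosed_Icc isClosed_Iic).csSup_mem
      ⟨a, ⟨le_rfl, hb⟩, ha⟩ hAbdd
  have habove : ∀ u ∈ Ioc (sSup A) b, M < F u := fun u hu => by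
    by_contra! h
    exact (le_csSup hAbdd ⟨⟨hsA.1.1.trans hu.1.le, hu.2⟩, h⟩).not_gt hu.1
  have key := integral_le_sub_of_hasDerivWithinAt_Ioi_off_finite (F := fun u => -F u) (φ := 0)
    (hS b) hsA.1.2 (hFc.mono (Icc_subset_Icc_left hsA.1.1)).neg integrableOn_zero
    fun t ht => by
      obtain ⟨d, hd0, hder⟩ := hd t (hsA.1.1.trans_lt ht.1.1)
        (fun h => ht.2 ⟨h, hsA.1.1.trans ht.1.1.le, ht.1.2.le⟩) (habove t ⟨ht.1.1, ht.1.2.le⟩)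
      exact ⟨-d, hder.neg, by simpa using hd0⟩
  simp only [Pi.zero_apply, intervalIntegral.integral_zero] at key
  linarith [show F (sSup A) ≤ M from hsA.2]

theorem integrableOn_Icc_of_continuousOn_diff_finite {f : ℝ → ℝ} {S : Set ℝ} (hS : S.Finite)
    (hf : ContinuousOn f (Icc a b \ S)) {B : ℝ} (hB : ∀ t ∈ Icc a b \ S, |f t| ≤ B) :
    IntegrableOn f (Icc a b) := by
  have hmeas : MeasurableSet (Icc a b \ S) := measurableSet_Icc.diff hS.measurableSet
  refine IntegrableOn.congr_set_ae ?_ (sdiff_null_ae_eq_self (hS.measure_zero volume)).symm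
  refine ⟨hf.aestronglyMeasurable hmeas, .restrict_of_bounded (C := B)
    ((measure_mono sdiff_subset).trans_lt measure_Icc_lt_top) ?_⟩
  filter_upwards [ae_restrict_mem hmeas] with t ht using hB t ht

theorem HasDerivAt.eventually_gt_nhdsGT {f : ℝ → ℝ} {f' t : ℝ} (hf : HasDerivAt f f' t)
    (hf' : 0 < f') : ∀ᶠ s in 𝓝[>] t, f t < f s := by
  filter_upwards [(hasDerivAt_iff_tendsto_slope_left_right.1 hf).2.eventually (lt_mem_nhds hf'),
    self_mem_nhdsWithin] with s hs hts
  exact (slope_pos_iff_of_le (le_of_lt hts)).1 hs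

theorem HasDerivAt.eventually_lt_nhdsGT {f : ℝ → ℝ} {f' t : ℝ} (hf : HasDerivAt f f' t)
    (hf' : f' < 0) : ∀ᶠ s in 𝓝[>] t, f s < f t := by
  filter_upwards [(hasDerivAt_iff_tendsto_slope_left_right.1 hf).2.eventually (gt_mem_nhds hf'),
    self_mem_nhdsWithin] with s hs hts
  exact (slope_neg_iff_of_le (le_of_lt hts)).1 hs

theorem HasDerivAt.lipschitz_comp_of_deriv_zero {Φ x : ℝ → ℝ} {L t : ℝ}
    (hΦ : ∀ y z, |Φ y - Φ z| ≤ L * |y - z|) (hx : HasDerivAt x 0 t) :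
    HasDerivAt (fun s => Φ (x s)) 0 t := by
  rw [hasDerivAt_iff_isLittleO] at hx ⊢
  simp only [smul_zero, sub_zero] at hx ⊢
  exact (Asymptotics.IsBigO.of_bound L (.of_forall fun s => hΦ (x s) (x t))).trans_isLittleO hx

theorem nhdsLE_inf_ae_le_nhdsLT (θ : ℝ) : 𝓝[≤] θ ⊓ ae volume ≤ 𝓝[<] θ := by
  rw [← Iic_sdiff_right, sdiff_eq, nhdsWithin_inter']
  exact inf_le_inf_left _ (le_principal_iff.2 (compl_mem_ae_iff.2 (measure_singleton θ)))

end Calculus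

section Primitive

variable {ψ : ℝ → ℝ} {θ c : ℝ}

theorem Antitone.hasDerivWithinAt_integral_Ici (hψ : Antitone ψ) (a : ℝ)
    (hc : Tendsto ψ (𝓝[>] θ) (𝓝 c)) :
    HasDerivWithinAt (fun y => ∫ u in a..y, ψ u) c (Ici θ) θ :=
  intervalIntegral.integral_hasDerivWithinAt_of_tendsto_ae_right hψ.intervalIntegrable
    hψ.measurable.stronglyMeasurable.stronglyMeasurableAtFilter (hc.mono_left inf_le_left)

theorem Antitone.hasDerivWithinAt_integral_Iic (hψ : Antitone ψ) (a : ℝ)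
    (hc : Tendsto ψ (𝓝[<] θ) (𝓝 c)) :
    HasDerivWithinAt (fun y => ∫ u in a..y, ψ u) c (Iic θ) θ :=
  intervalIntegral.integral_hasDerivWithinAt_of_tendsto_ae_right hψ.intervalIntegrable
    hψ.measurable.stronglyMeasurable.stronglyMeasurableAtFilter
    (hc.mono_left (nhdsLE_inf_ae_le_nhdsLT θ))

theorem abs_integral_sub_integral_le {L : ℝ} (hψ : ∀ y z, IntervalIntegrable ψ volume y z)
    (hL : ∀ y, |ψ y| ≤ L) (a y z : ℝ) :
    |(∫ u in a..y, ψ u) - ∫ u in a..z, ψ u| ≤ L * |y - z| := by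
  rw [intervalIntegral.integral_interval_sub_left (hψ a y) (hψ a z)]
  exact intervalIntegral.norm_integral_le_of_norm_le_const fun u _ =>
    (Real.norm_eq_abs _).trans_le (hL u)

theorem Antitone.exists_hasDerivWithinAt_Ioi_integral_comp_ge (hψ : Antitone ψ) {L : ℝ}
    (hL : ∀ y, |ψ y| ≤ L) {x : ℝ → ℝ} {x' t α β : ℝ} (hx : HasDerivAt x x' t)
    (hright : 0 < x' → ∀ᶠ y in 𝓝[>] (x t), α + β ≤ ψ y)
    (hleft : x' < 0 → ∀ᶠ y in 𝓝[<] (x t), ψ y ≤ α - β) :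
    ∃ d, HasDerivWithinAt (fun s => ∫ u in (0 : ℝ)..x s, ψ u) d (Ioi t) t ∧
      α * x' + β * |x'| ≤ d := by
  have hxt := hx.continuousAt.continuousWithinAt (s := Ioi t) |>.tendsto
  rcases lt_trichotomy x' 0 with hneg | rfl | hpos
  · have hc := hψ.tendsto_nhdsLT (x t)
    have htend : Tendsto x (𝓝[>] t) (𝓝[≤] (x t)) := tendsto_nhdsWithin_iff.2
      ⟨hxt, (hx.eventually_lt_nhdsGT hneg).mono fun s hs => le_of_lt hs⟩
    refine ⟨_, HasDerivAtFilter.comp (hψ.hasDerivWithinAt_integral_Iic 0 hc) hx.hasDerivWithinAt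
      (htend.prodMap (tendsto_pure_pure _ _)), ?_⟩
    have := _root_.le_of_tendsto hc (hleft hneg)
    rw [abs_of_neg hneg]
    nlinarith
  · exact ⟨0, (HasDerivAt.lipschitz_comp_of_deriv_zero
      (abs_integral_sub_integral_le (fun _ _ => hψ.intervalIntegrable) hL 0) hx).hasDerivWithinAt,
      by simp⟩
  · have hc := hψ.tendsto_nhdsGT (x t)
    have htend : Tendsto x (𝓝[>] t) (𝓝[≥] (x t)) := tendsto_nhdsWithin_iff.2
      ⟨hxt, (hx.eventually_gt_nhdsGT hpos).mono fun s hs => le_of_lt hs⟩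
    refine ⟨_, HasDerivAtFilter.comp (hψ.hasDerivWithinAt_integral_Ici 0 hc) hx.hasDerivWithinAt
      (htend.prodMap (tendsto_pure_pure _ _)), ?_⟩
    have := _root_.ge_of_tendsto hc (hright hpos)
    rw [abs_of_pos hpos]
    nlinarith

end Primitive

section Order

variable {α : Type*} [Preorder α] {f : ℕ → α} {K k : ℕ}

theorem MonotoneOn.mem_Icc_of_lt (hf : MonotoneOn f (Iio K)) (hk : k < K) :
    f k ∈ Icc (f 0) (f (K - 1)) :=
  ⟨hf (k.zero_le.trans_lt hk) hk k.zero_le, hf hk (by simp; omega) (by omega)⟩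

theorem AntitoneOn.mem_Icc_of_lt (hf : AntitoneOn f (Iio K)) (hk : k < K) :
    f k ∈ Icc (f (K - 1)) (f 0) :=
  ⟨hf hk (by simp; omega) (by omega), hf (k.zero_le.trans_lt hk) hk k.zero_le⟩

end Order

section Potential

variable {K : ℕ} {a w : ℕ → ℝ} {g y : ℝ} {k : ℕ}

-- For antitone `w` the minimum is `w j - g / 2` with `j` the largest index such that `a j < y`.
noncomputable def potentialSlope (K : ℕ) (a w : ℕ → ℝ) (g y : ℝ) : ℝ :=
  ((Finset.range K).filter (a · < y)).fold min (w 0 + g / 2) fun k => w k - g / 2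

noncomputable def potential (K : ℕ) (a w : ℕ → ℝ) (g y : ℝ) : ℝ :=
  ∫ u in (0 : ℝ)..y, potentialSlope K a w g u

theorem potentialSlope_antitone : Antitone (potentialSlope K a w g) := by
  intro y z hyz
  refine (Finset.le_fold_min _).2 ⟨(Finset.fold_min_le _).2 (Or.inl le_rfl), fun j hj =>
    (Finset.fold_min_le _).2 (Or.inr ⟨j, ?_, le_rfl⟩)⟩
  simp only [Finset.mem_filter] at hj ⊢
  exact ⟨hj.1, hj.2.trans_le hyz⟩

theorem potentialSlope_le (hk : k < K) (hy : a k < y) :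
    potentialSlope K a w g y ≤ w k - g / 2 :=
  (Finset.fold_min_le _).2 (Or.inr ⟨k, Finset.mem_filter.2 ⟨Finset.mem_range.2 hk, hy⟩, le_rfl⟩)

theorem le_potentialSlope (ha : MonotoneOn a (Iio K))
    (hgap : ∀ i j, i < j → j < K → w j + g ≤ w i) (hg : 0 ≤ g) (hk : k < K) (hy : y < a k) :
    w k + g / 2 ≤ potentialSlope K a w g y := by
  refine (Finset.le_fold_min _).2 ⟨?_, fun j hj => ?_⟩
  · rcases k.eq_zero_or_pos with rfl | hk0
    · rfl
    · linarith [hgap 0 k hk0 hk]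
  · simp only [Finset.mem_filter, Finset.mem_range] at hj
    have hjk : j < k := lt_of_not_ge fun hkj => (hj.2.trans hy).not_ge (ha hk hj.1 hkj)
    linarith [hgap j k hjk hk]

theorem abs_potentialSlope_le (hK : 0 < K) (hw : ∀ k < K, 0 ≤ w k) (hg : 0 ≤ g) (y : ℝ) :
    |potentialSlope K a w g y| ≤ w 0 + g / 2 := by
  have hw0 := hw 0 hK
  refine abs_le.2 ⟨(Finset.le_fold_min _).2 ⟨by linarith, fun j hj => ?_⟩,
    (Finset.fold_min_le _).2 (Or.inl le_rfl)⟩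
  linarith [hw j (Finset.mem_range.1 (Finset.mem_filter.1 hj).1)]

theorem exists_hasDerivWithinAt_Ioi_potential_comp_ge (hK : 0 < K) (ha : MonotoneOn a (Iio K))
    (hgap : ∀ i j, i < j → j < K → w j + g ≤ w i) (hw : ∀ k < K, 0 ≤ w k) (hg : 0 ≤ g)
    {x : ℝ → ℝ} {x' t : ℝ} (hx : HasDerivAt x x' t) (hk : k < K)
    (hpos : 0 < x' → x t < a k) (hneg : x' < 0 → a k < x t) :
    ∃ d, HasDerivWithinAt (fun s => potential K a w g (x s)) d (Ioi t) t ∧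
      w k * x' + g / 2 * |x'| ≤ d :=
  potentialSlope_antitone.exists_hasDerivWithinAt_Ioi_integral_comp_ge
    (abs_potentialSlope_le hK hw hg) hx
    (fun h => (eventually_nhdsWithin_of_eventually_nhds (eventually_lt_nhds (hpos h))).mono
      fun _ hy => le_potentialSlope ha hgap hg hk hy)
    (fun h => (eventually_nhdsWithin_of_eventually_nhds (eventually_gt_nhds (hneg h))).mono
      fun _ hy => potentialSlope_le hk hy)

theorem continuous_potential : Continuous (potential K a w g) :=
  intervalIntegral.continuous_primitive (fun _ _ => potentialSlope_antitone.intervalIntegrable) 0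

theorem abs_potential_sub_le (hK : 0 < K) (hw : ∀ k < K, 0 ≤ w k) (hg : 0 ≤ g) (y z : ℝ) :
    |potential K a w g y - potential K a w g z| ≤ (w 0 + g / 2) * |y - z| :=
  abs_integral_sub_integral_le (fun _ _ => potentialSlope_antitone.intervalIntegrable)
    (abs_potentialSlope_le hK hw hg) 0 y z

end Potential

section Relaxation

variable {c y m M : ℝ}

theorem neg_mul_sub_div_pos_iff (hc : 0 < c) (hm : m < M) :
    0 < -c * ((y - m) / (M - m)) ↔ y < m := by
  rw [show -c * ((y - m) / (M - m)) = c / (M - m) * (m - y) by ring,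
    mul_pos_iff_of_pos_left (div_pos hc (sub_pos.2 hm)), sub_pos]

theorem neg_mul_sub_div_neg_iff (hc : 0 < c) (hm : m < M) :
    -c * ((y - m) / (M - m)) < 0 ↔ m < y := by
  rw [show -c * ((y - m) / (M - m)) = -(c / (M - m) * (y - m)) by ring, neg_lt_zero,
    mul_pos_iff_of_pos_left (div_pos hc (sub_pos.2 hm)), sub_pos]

variable {vm vM x xd : ℝ → ℝ} {S : Set ℝ}

theorem mem_Icc_of_relaxation {lo hi : ℝ} (hc : 0 < c) (hS : ∀ T, (S ∩ Icc 0 T).Finite)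
    (hvm : ∀ t, 0 ≤ t → vm t ∈ Icc lo hi) (hvM : ∀ t, 0 ≤ t → vm t < vM t)
    (hx : ContinuousOn x (Ici 0)) (hode : ∀ t, 0 ≤ t → t ∉ S → HasDerivAt x (xd t) t)
    (hform : ∀ t, 0 ≤ t → t ∉ S → xd t = -c * ((x t - vm t) / (vM t - vm t)))
    (hx0 : x 0 ∈ Icc lo hi) {t : ℝ} (ht : 0 ≤ t) : x t ∈ Icc lo hi := by
  constructor
  · have := le_of_hasDerivWithinAt_Ioi_nonpos_of_gt hS (F := fun s => -x s) (M := -lo) hx.neg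
      (neg_le_neg hx0.1)
      (fun s hs hsS hlt => ⟨-xd s, ?_, (hode s hs.le hsS).neg.hasDerivWithinAt⟩) ht
    · linarith
    · rw [hform s hs.le hsS, neg_nonpos]
      exact ((neg_mul_sub_div_pos_iff hc (hvM s hs.le)).2 (by linarith [(hvm s hs.le).1])).le
  · refine le_of_hasDerivWithinAt_Ioi_nonpos_of_gt hS hx hx0.2
      (fun s hs hsS hlt => ⟨xd s, ?_, (hode s hs.le hsS).hasDerivWithinAt⟩) ht
    rw [hform s hs.le hsS]
    exact ((neg_mul_sub_div_neg_iff hc (hvM s hs.le)).2 (by linarith [(hvm s hs.le).2])).le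

theorem integrableOn_Icc_of_relaxation {δ D W T : ℝ} (hS : (S ∩ Icc 0 T).Finite)
    (hpc : ∀ t, 0 ≤ t → t ∉ S → ∀ᶠ s in 𝓝 t, vm s = vm t ∧ vM s = vM t)
    (hx : ContinuousOn x (Ici 0))
    (hform : ∀ t, 0 ≤ t → t ∉ S → xd t = -c * ((x t - vm t) / (vM t - vm t)))
    (hδ : 0 < δ) (hwidth : ∀ t, 0 ≤ t → vM t - vm t ∈ Icc δ D)
    (hW : ∀ t, 0 ≤ t → |x t - vm t| ≤ W) :
    IntegrableOn (fun t => (vM t - vm t) * xd t) (Icc 0 T) ∧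
      IntegrableOn (fun t => |xd t|) (Icc 0 T) := by
  set U := Icc 0 T \ (S ∩ Icc 0 T)
  have hU : ∀ t ∈ U, 0 ≤ t ∧ t ∉ S := fun t ht => ⟨ht.1.1, fun h => ht.2 ⟨h, ht.1⟩⟩
  have hvm : ContinuousOn vm U := fun t ht => (EventuallyEq.continuousAt
    ((hpc t (hU t ht).1 (hU t ht).2).mono fun _ hs => hs.1)).continuousWithinAt
  have hvM : ContinuousOn vM U := fun t ht => (EventuallyEq.continuousAt
    ((hpc t (hU t ht).1 (hU t ht).2).mono fun _ hs => hs.2)).continuousWithinAt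
  have hxd : ContinuousOn xd U :=
    (continuousOn_const.mul (((hx.mono fun t ht => (hU t ht).1).sub hvm).div (hvM.sub hvm)
      fun t ht => (hδ.trans_le (hwidth t (hU t ht).1).1).ne')).congr
      fun t ht => hform t (hU t ht).1 (hU t ht).2
  have hxd_le : ∀ t ∈ U, |xd t| ≤ |c| * W / δ := fun t ht => by
    obtain ⟨ht0, htS⟩ := hU t ht
    have hpos := hδ.trans_le (hwidth t ht0).1
    rw [hform t ht0 htS, abs_mul, abs_neg, abs_div, abs_of_pos hpos, mul_div_assoc]
    gcongr
    exacts [(abs_nonneg _).trans (hW t ht0), hW t ht0, (hwidth t ht0).1]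
  refine ⟨integrableOn_Icc_of_continuousOn_diff_finite hS ((hvM.sub hvm).mul hxd)
    (B := D * (|c| * W / δ)) fun t ht => ?_, integrableOn_Icc_of_continuousOn_diff_finite hS hxd.abs
    fun t ht => (abs_abs (xd t)).trans_le (hxd_le t ht)⟩
  obtain ⟨hlo, hhi⟩ := hwidth t (hU t ht).1
  rw [abs_mul, abs_of_pos (hδ.trans_le hlo)]
  exact mul_le_mul hhi (hxd_le t ht) (abs_nonneg _) ((hδ.trans_le hlo).le.trans hhi)

theorem integral_le_potential_sub_of_relaxation {K : ℕ} {a b : ℕ → ℝ} {g c T : ℝ}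
    (hK : 0 < K) (ha : MonotoneOn a (Iio K))
    (hgap : ∀ i j, i < j → j < K → b j - a j + g ≤ b i - a i) (hab : ∀ k < K, a k < b k)
    (hg : 0 ≤ g) (hc : 0 < c) (hstate : ∀ t, 0 ≤ t → ∃ k < K, vm t = a k ∧ vM t = b k)
    (hS : (S ∩ Icc 0 T).Finite) (hx : ContinuousOn x (Ici 0))
    (hode : ∀ t, 0 ≤ t → t ∉ S → HasDerivAt x (xd t) t)
    (hform : ∀ t, 0 ≤ t → t ∉ S → xd t = -c * ((x t - vm t) / (vM t - vm t)))
    (hT : 0 ≤ T) (hint₁ : IntegrableOn (fun t => (vM t - vm t) * xd t) (Icc 0 T))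
    (hint₂ : IntegrableOn (fun t => |xd t|) (Icc 0 T)) :
    (∫ t in (0 : ℝ)..T, (vM t - vm t) * xd t) + g / 2 * ∫ t in (0 : ℝ)..T, |xd t| ≤
      potential K a (fun k => b k - a k) g (x T) - potential K a (fun k => b k - a k) g (x 0) := by
  rw [← intervalIntegral.integral_const_mul, ← intervalIntegral.integral_add
    ((intervalIntegrable_iff_integrableOn_Icc_of_le hT).2 hint₁)
    ((intervalIntegrable_iff_integrableOn_Icc_of_le hT).2 hint₂ |>.const_mul _)]
  refine integral_le_sub_of_hasDerivWithinAt_Ioi_off_finite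
    (F := fun s => potential K a _ g (x s)) hS hT
    (continuous_potential.comp_continuousOn (hx.mono Icc_subset_Ici_self))
    (hint₁.add (hint₂.const_mul _)) fun t ht => ?_
  have ht0 : 0 ≤ t := ht.1.1.le
  have htS : t ∉ S := fun h => ht.2 ⟨h, ht0, ht.1.2.le⟩
  obtain ⟨k, hk, hvmt, hvMt⟩ := hstate t ht0
  have hvmM : vm t < vM t := hvmt ▸ hvMt ▸ hab k hk
  obtain ⟨d, hd, hle⟩ := exists_hasDerivWithinAt_Ioi_potential_comp_ge hK ha hgap
    (fun k hk => (sub_pos.2 (hab k hk)).le) hg (hode t ht0 htS) hk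
    (fun h => hvmt ▸ (neg_mul_sub_div_pos_iff hc hvmM).1 (hform t ht0 htS ▸ h))
    (fun h => hvmt ▸ (neg_mul_sub_div_neg_iff hc hvmM).1 (hform t ht0 htS ▸ h))
  exact ⟨d, hd, by rwa [hvmt, hvMt]⟩

end Relaxation

theorem revenue_gap_upper_bound_general (n K : ℕ) (hn : 2 ≤ n)
    (vmk vMk : ℕ → ℝ)
    (hlt : ∀ k < K, vmk k < vMk k)
    (hmono : ∀ k, k + 1 < K → vmk k < vmk (k + 1))
    (hDmono : ∀ k, k + 1 < K → vMk (k + 1) - vmk (k + 1) < vMk k - vmk k)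
    (vm vM : ℝ → ℝ)
    (hstate : ∀ t, 0 ≤ t → ∃ k < K, vm t = vmk k ∧ vM t = vMk k)
    (S : Set ℝ)
    (hSfin : ∀ T : ℝ, (S ∩ Set.Icc 0 T).Finite)
    (hpc : ∀ t, 0 ≤ t → t ∉ S → ∀ᶠ s in nhds t, vm s = vm t ∧ vM s = vM t)
    (x xd : ℝ → ℝ)
    (hx : ContinuousOn x (Set.Ici 0))
    (hode : ∀ t, 0 ≤ t → t ∉ S → HasDerivAt x (xd t) t)
    (hform : ∀ t, 0 ≤ t → t ∉ S →
      xd t = -(1 / ((n : ℝ) * ((n : ℝ) - 1))) * ((x t - vm t) / (vM t - vm t)))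
    (hx0 : x 0 ∈ Set.Icc (vmk 0) (vmk (K - 1)))
    (g : ℝ)
    (hg : IsLeast ((fun k => (vMk k - vmk k) - (vMk (k + 1) - vmk (k + 1))) ''
      {k | k + 1 < K}) g) :
    0 < g ∧ ∃ C, 0 ≤ C ∧ ∀ T > (0 : ℝ),
      (∫ t in (0:ℝ)..T, (vM t - vm t) * xd t)
        ≤ -(g / 2) * (∫ t in (0:ℝ)..T, |xd t|) + C := by
  set w : ℕ → ℝ := fun k => vMk k - vmk k
  have hK : 0 < K := (hstate 0 le_rfl).choose_spec.1.pos
  have hg0 : 0 < g := by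
    obtain ⟨k, hk, rfl⟩ := hg.1
    exact sub_pos.2 (hDmono k hk)
  have hvmk : MonotoneOn vmk (Iio K) :=
    (strictMonoOn_of_lt_add_one ordConnected_Iio fun k _ _ hk => hmono k hk).monotoneOn
  have hw : AntitoneOn w (Iio K) :=
    (strictAntiOn_of_add_one_lt ordConnected_Iio fun k _ _ hk => hDmono k hk).antitoneOn
  have hgap : ∀ i j, i < j → j < K → w j + g ≤ w i := fun i j hij hj => by
    linarith [hg.2 ⟨i, show i + 1 < K by omega, rfl⟩, hw (show i + 1 < K by omega) hj hij]
  have hwpos : ∀ k < K, 0 < w k := fun k hk => sub_pos.2 (hlt k hk)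
  have hc : 0 < 1 / ((n : ℝ) * ((n : ℝ) - 1)) := by
    have : (2 : ℝ) ≤ n := by exact_mod_cast hn
    exact one_div_pos.2 (by nlinarith)
  have hvm : ∀ t, 0 ≤ t → vm t ∈ Icc (vmk 0) (vmk (K - 1)) := fun t ht => by
    obtain ⟨k, hk, hvmt, -⟩ := hstate t ht
    exact hvmt ▸ hvmk.mem_Icc_of_lt hk
  have hwidth : ∀ t, 0 ≤ t → vM t - vm t ∈ Icc (w (K - 1)) (w 0) := fun t ht => by
    obtain ⟨k, hk, hvmt, hvMt⟩ := hstate t ht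
    exact hvmt ▸ hvMt ▸ hw.mem_Icc_of_lt hk
  have hinv : ∀ t, 0 ≤ t → x t ∈ Icc (vmk 0) (vmk (K - 1)) := fun t ht =>
    mem_Icc_of_relaxation hc hSfin hvm (fun t ht => sub_pos.1 <| (hwpos _ (by omega)).trans_le
      (hwidth t ht).1) hx hode hform hx0 ht
  have hdist : ∀ t, 0 ≤ t → |x t - vm t| ≤ vmk (K - 1) - vmk 0 := fun t ht => by
    rw [← Real.dist_eq]
    exact Real.dist_le_of_mem_Icc (hinv t ht) (hvm t ht)
  refine ⟨hg0, (w 0 + g / 2) * (vmk (K - 1) - vmk 0),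
    mul_nonneg (by linarith [hwpos 0 hK]) (by linarith [hx0.1, hx0.2]), fun T hT => ?_⟩
  obtain ⟨hint₁, hint₂⟩ := integrableOn_Icc_of_relaxation (hSfin T) hpc hx hform
    (hwpos _ (by omega)) hwidth hdist
  have hincr := integral_le_potential_sub_of_relaxation hK hvmk hgap hlt hg0.le hc hstate
    (hSfin T) hx hode hform hT.le hint₁ hint₂
  have hlip :=
    abs_potential_sub_le (a := vmk) hK (fun k hk => (hwpos k hk).le) hg0.le (x T) (x 0)
  have hxT : |x T - x 0| ≤ vmk (K - 1) - vmk 0 := by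
    rw [← Real.dist_eq]
    exact Real.dist_le_of_mem_Icc (hinv T hT.le) hx0
  nlinarith [le_abs_self (potential K vmk w g (x T) - potential K vmk w g (x 0)), hwpos 0 hK]

/-- Finite-time upper bound behind revenue inequivalence when the interval width
`Δv^(k) = vM^(k) - vm^(k)` decreases with `k`: along the adaptive dynamics
`x' = -(1/(n(n-1))) (x - vm(t))/(vM(t) - vm(t))` in a piecewise-constant
`K`-state environment, with `g` the minimum gap of consecutive widths,
`∫_0^T Δv(t) x'(t) dt ≤ -(g/2) ∫_0^T |x'(t)| dt + C` for a constant `C`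
independent of `T` (and `g > 0`). -/
theorem revenue_gap_upper_bound (n K : ℕ) (hn : 2 ≤ n) (hK : 2 ≤ K)
    (vmk vMk : ℕ → ℝ)
    (hlt : ∀ k < K, vmk k < vMk k)
    (hmono : ∀ k, k + 1 < K → vmk k < vmk (k + 1))
    (hDmono : ∀ k, k + 1 < K → vMk (k + 1) - vmk (k + 1) < vMk k - vmk k)
    (vm vM : ℝ → ℝ)
    (hstate : ∀ t, 0 ≤ t → ∃ k < K, vm t = vmk k ∧ vM t = vMk k)
    (S : Set ℝ)
    (hSfin : ∀ T : ℝ, (S ∩ Set.Icc 0 T).Finite)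
    (hpc : ∀ t, 0 ≤ t → t ∉ S → ∀ᶠ s in nhds t, vm s = vm t ∧ vM s = vM t)
    (x xd : ℝ → ℝ)
    (hx : ContinuousOn x (Set.Ici 0))
    (hode : ∀ t, 0 ≤ t → t ∉ S → HasDerivAt x (xd t) t)
    (hform : ∀ t, 0 ≤ t → t ∉ S →
      xd t = -(1 / ((n : ℝ) * ((n : ℝ) - 1))) * ((x t - vm t) / (vM t - vm t)))
    (hx0 : x 0 ∈ Set.Icc (vmk 0) (vmk (K - 1)))
    (g : ℝ)
    (hg : IsLeast ((fun k => (vMk k - vmk k) - (vMk (k + 1) - vmk (k + 1))) ''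
      {k | k + 1 < K}) g) :
    0 < g ∧ ∃ C, 0 ≤ C ∧ ∀ T > (0 : ℝ),
      (∫ t in (0:ℝ)..T, (vM t - vm t) * xd t)
        ≤ -(g / 2) * (∫ t in (0:ℝ)..T, |xd t|) + C :=
  revenue_gap_upper_bound_general n K hn vmk vMk hlt hmono hDmono vm vM hstate S hSfin hpc x xd hx
    hode hform hx0 g hg
end

section
/- Fix an integer n ≥ 2 and an integer K ≥ 2. Let (vm^(1), vM^(1)), …, (vm^(K), vM^(K)) be pairs of reals with vm^(k) < vM^(k) for each k, vm^(1) < ⋯ < vm^(K), and Δv^(1) > ⋯ > Δv^(K) where Δv^(k) = vM^(k) − vm^(k). Let (vm(t), vM(t)) be a piecewise-constant function of t ∈ [0,∞) taking values in {(vm^(k), vM^(k)) : 1 ≤ k ≤ K}, with finitely many switching times in each bounded interval, and let x : [0,∞) → ℝ be continuous, differentiable at every non-switching time, with x'(t) = −(1/(n(n−1)))·(x(t) − vm(t))/(vM(t) − vm(t)) there, and x(0) ∈ [vm^(1), vm^(K)]. Write Δv(t) = vM(t) − vm(t), and suppose the time-average path length satisfies liminf_{T→∞} (1/T)·∫_0^T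 |x'(t)| dt = L > 0. Then limsup_{T→∞} (1/T)·∫_0^T Δv(t)·x'(t) dt ≤ −(L/2)·min_{1 ≤ k ≤ K−1} (Δv^(k) − Δv^(k+1)) < 0; consequently limsup_{T→∞} (1/T)·∫_0^T ((n−1)/n)·Δv(t)·x'(t) dt < 0, i.e., the time-averaged expected payoff of each bidder in the first-price auction is strictly smaller than that in the second-price auction. -/
/-!
Write `D = vM - vm` and `g` for the least gap between consecutive widths. As
`x' = -c (x - vm) / D`, the parameter `x` rises while below the current `vm` and falls while above
it, so it never leaves `[vmk 0, vmk (K - 1)]`. Let `φ` be the step function equal to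
`D_(k+1) + g / 2` between the levels `vmk k` and `vmk (k + 1)`. In state `k`, if `x < vmk k` then
`x' ≥ 0` and `φ(x) ≥ D_k + g / 2`, while if `x > vmk k` then `x' ≤ 0` and `φ(x) ≤ D_k - g / 2`; in
both cases `D x' + (g / 2) |x'| ≤ φ(x) x'`. After smoothing `φ` over a length `r` (which costs an
error `δ = O(r)`, since `|x'| = O(r)` within `r` of `vmk k`), integration along the trajectory gives
`∫₀ᵀ D x' ≤ Φ(x T) - Φ(x 0) + δ T - (g / 2) ∫₀ᵀ |x'|` with `Φ' = φ` bounded on the invariant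
interval. Dividing by `T` and letting `T → ∞`, then `δ → 0`, yields the bound `-(g / 2) L`.
-/

open MeasureTheory Filter Set Topology

theorem add_le_of_lt_of_forall_succ_add_le {f : ℕ → ℝ} {K : ℕ} {g : ℝ} (hg : 0 ≤ g)
    (h : ∀ k, k + 1 < K → f (k + 1) + g ≤ f k) {j k : ℕ} (hjk : j < k) (hk : k < K) :
    f k + g ≤ f j := by
  induction k, hjk using Nat.le_induction with
  | base => exact h j hk
  | succ k hjk ih => linarith [h k hk, ih (by omega)]

theorem le_of_le_of_forall_lt_add_le {f : ℕ → ℝ} {K : ℕ} {g : ℝ} (hg : 0 ≤ g)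
    (h : ∀ j k, j < k → k < K → f k + g ≤ f j) {j k : ℕ} (hjk : j ≤ k) (hk : k < K) :
    f k ≤ f j := by
  rcases hjk.lt_or_eq with hjk | rfl
  · linarith [h j k hjk hk]
  · rfl

theorem limsup_le_of_forall_pos_eventually_le {ι : Type*} {l : Filter ι} [l.NeBot]
    {u : ι → ℝ} {a : ℝ} (hu : IsBoundedUnder (· ≥ ·) l u)
    (h : ∀ η > 0, ∀ᶠ i in l, u i ≤ a + η) : limsup u l ≤ a :=
  le_of_forall_pos_le_add fun η hη => limsup_le_of_le hu.isCoboundedUnder_le (h η hη)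

theorem limsup_const_mul_le_of_forall_pos_eventually_le {ι : Type*} {l : Filter ι} [l.NeBot]
    {u : ι → ℝ} {a c : ℝ} (hc : 0 < c) (hu : IsBoundedUnder (· ≥ ·) l u)
    (h : ∀ η > 0, ∀ᶠ i in l, u i ≤ a + η) : limsup (fun i => c * u i) l ≤ c * a := by
  obtain ⟨B, hB⟩ := hu
  refine limsup_le_of_forall_pos_eventually_le ⟨c * B, eventually_map.2 <|
    (eventually_map.1 hB).mono fun i hi => mul_le_mul_of_nonneg_left hi hc.le⟩ fun η hη => ?_
  filter_upwards [h (η / c) (by positivity)] with i hi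
  calc c * u i ≤ c * (a + η / c) := mul_le_mul_of_nonneg_left hi hc.le
    _ = c * a + η := by field_simp

theorem eventually_average_le {P Q : ℝ → ℝ} {κ L : ℝ} (hκ : 0 ≤ κ)
    (hQ : ∀ T, 0 ≤ T → 0 ≤ Q T) (hL : liminf (fun T => T⁻¹ * Q T) atTop = L)
    (hP : ∀ δ > 0, ∃ C, ∀ T, 0 ≤ T → P T ≤ C + δ * T - κ * Q T) :
    ∀ η > 0, ∀ᶠ T in atTop, T⁻¹ * P T ≤ -(κ * L) + η := by
  intro η hη
  obtain ⟨C, hC⟩ := hP (η / 3) (by positivity)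
  have hQavg : ∀ᶠ T in atTop, L - η / (3 * (κ + 1)) < T⁻¹ * Q T := by
    have : 0 < η / (3 * (κ + 1)) := by positivity
    refine eventually_lt_of_lt_liminf (by rw [hL]; linarith) ⟨0, eventually_map.2 <|
      (eventually_ge_atTop 0).mono fun T hT => mul_nonneg (inv_nonneg.2 hT) (hQ T hT)⟩
  have hCT : ∀ᶠ T in atTop, C / T < η / 3 :=
    (tendsto_const_nhds.div_atTop tendsto_id).eventually (gt_mem_nhds (by positivity))
  filter_upwards [eventually_gt_atTop 0, hQavg, hCT] with T hT hQT hCT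
  have hκQ : κ * (L - η / (3 * (κ + 1))) ≤ κ * (T⁻¹ * Q T) :=
    mul_le_mul_of_nonneg_left hQT.le hκ
  have hκη : κ * (η / (3 * (κ + 1))) ≤ η / 3 := by
    rw [mul_div_assoc', div_le_div_iff₀ (by positivity) (by norm_num)]; nlinarith
  calc T⁻¹ * P T ≤ T⁻¹ * (C + η / 3 * T - κ * Q T) :=
        mul_le_mul_of_nonneg_left (hC T hT.le) (inv_nonneg.2 hT.le)
    _ = C / T + η / 3 - κ * (T⁻¹ * Q T) := by field_simp
    _ ≤ -(κ * L) + η := by nlinarith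

theorem intervalIntegrable_of_continuousOn_sdiff_countable {f : ℝ → ℝ} {a b C : ℝ} {s : Set ℝ}
    (hab : a ≤ b) (hs : (s ∩ Ioo a b).Countable) (hf : ContinuousOn f (Ioo a b \ s))
    (hC : ∀ t ∈ Ioo a b \ s, |f t| ≤ C) : IntervalIntegrable f volume a b := by
  rw [← sdiff_inter_self_eq_sdiff] at hf hC
  have hmeas : MeasurableSet (Ioo a b \ (s ∩ Ioo a b)) := measurableSet_Ioo.diff hs.measurableSet
  have hae : (Ioo a b \ (s ∩ Ioo a b) : Set ℝ) =ᵐ[volume] (Ioo a b : Set ℝ) :=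
    sdiff_null_ae_eq_self (hs.measure_zero volume)
  rw [intervalIntegrable_iff_integrableOn_Ioo_of_le hab, ← integrableOn_congr_set_ae hae]
  exact .of_bound ((measure_mono sdiff_subset).trans_lt measure_Ioo_lt_top)
    (hf.aestronglyMeasurable hmeas) C ((ae_restrict_mem hmeas).mono hC)

theorem le_of_hasDerivAt_nonpos_of_lt {f f' : ℝ → ℝ} {s : Set ℝ} {b : ℝ}
    (hs : ∀ T, (s ∩ Icc 0 T).Finite) (hf : ContinuousOn f (Ici 0))
    (hd : ∀ t, 0 ≤ t → t ∉ s → HasDerivAt f (f' t) t)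
    (hneg : ∀ t, 0 ≤ t → t ∉ s → b < f t → f' t ≤ 0) (h0 : f 0 ≤ b) {t : ℝ} (ht : 0 ≤ t) :
    f t ≤ b := by
  by_contra! hlt
  set A := Icc 0 t ∩ f ⁻¹' Iic b
  have hA : IsClosed A :=
    (hf.mono Icc_subset_Ici_self).preimage_isClosed_of_isClosed isClosed_Icc isClosed_Iic
  have hAbdd : BddAbove A := ⟨t, fun u hu => hu.1.2⟩
  have ht₀ : sSup A ∈ A := hA.csSup_mem ⟨0, ⟨le_rfl, ht⟩, h0⟩ hAbdd
  have hlt₀ : sSup A < t := ht₀.1.2.lt_of_ne fun h => (h ▸ hlt).not_ge ht₀.2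
  have habove : ∀ u ∈ Ioc (sSup A) t, b < f u := fun u hu => by
    by_contra! h
    exact (le_csSup hAbdd ⟨⟨ht₀.1.1.trans hu.1.le, hu.2⟩, h⟩).not_gt hu.1
  -- `s` has finitely many points in `[0, t]`, so some interval `(sSup A, t₂)` avoids `s`
  have hfree : ((s ∩ Icc 0 t) \ {sSup A})ᶜ ∈ 𝓝[>] sSup A :=
    nhdsWithin_le_nhds <| ((hs t).sdiff.isClosed.isOpen_compl).mem_nhds fun h => h.2 rfl
  obtain ⟨t₂, ht₂, hsub⟩ := (mem_nhdsGT_iff_exists_mem_Ioc_Ioo_subset hlt₀).1 hfree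
  have hanti : AntitoneOn f (Icc (sSup A) t₂) := by
    refine antitoneOn_of_hasDerivWithinAt_nonpos (convex_Icc _ _)
      (hf.mono fun u hu => ht₀.1.1.trans hu.1) (f' := f') (fun u hu => ?_) fun u hu => ?_
    all_goals
      rw [interior_Icc] at hu
      have hu₀ : 0 ≤ u := ht₀.1.1.trans hu.1.le
      have hus : u ∉ s := fun hs' =>
        hsub hu ⟨⟨hs', hu₀, hu.2.le.trans ht₂.2⟩, hu.1.ne'⟩
    · exact (hd u hu₀ hus).hasDerivWithinAt
    · exact hneg u hu₀ hus (habove u ⟨hu.1, hu.2.le.trans ht₂.2⟩)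
  have := hanti ⟨le_rfl, ht₂.1.le⟩ ⟨ht₂.1.le, le_rfl⟩ ht₂.1.le
  exact (habove t₂ ht₂).not_ge (this.trans ht₀.2)

theorem mul_add_abs_le_of_drift {p y m D c g r A v : ℝ} (hc : 0 ≤ c) (hD : 0 < D) (hr : 0 ≤ r)
    (hA : 0 ≤ A) (hv : v = -c * ((y - m) / D)) (hright : m ≤ y → p ≤ D - g / 2)
    (hleft : y ≤ m - r → D + g / 2 ≤ p) (hlow : D + g / 2 - A ≤ p) :
    D * v + g / 2 * |v| ≤ p * v + A * (c * r / D) := by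
  have hv' : v = c * (m - y) / D := by rw [hv]; ring
  have hslack : 0 ≤ A * (c * r / D) := by positivity
  rcases le_total m y with hmy | hym
  · have hv0 : v ≤ 0 := hv' ▸ div_nonpos_of_nonpos_of_nonneg
      (mul_nonpos_of_nonneg_of_nonpos hc (by linarith)) hD.le
    rw [abs_of_nonpos hv0]
    nlinarith [hright hmy]
  have hv0 : 0 ≤ v := hv' ▸ div_nonneg (mul_nonneg hc (by linarith)) hD.le
  rw [abs_of_nonneg hv0]
  rcases le_total y (m - r) with hyr | hry
  · nlinarith [hleft hyr]
  · have hvr : v ≤ c * r / D :=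
      hv' ▸ div_le_div_of_nonneg_right (mul_le_mul_of_nonneg_left (by linarith) hc) hD.le
    nlinarith [mul_le_mul_of_nonneg_left hvr hA]

theorem exists_continuous_potential {K : ℕ} (hK : 0 < K) {m D : ℕ → ℝ} {g r : ℝ} (hg : 0 ≤ g)
    (hr : 0 < r) (hm : ∀ j k, j ≤ k → k < K → m j ≤ m k)
    (hD : ∀ j k, j < k → k < K → D k + g ≤ D j) :
    ∃ φ : ℝ → ℝ, Continuous φ ∧ ∀ k < K, ∀ y,
      (m k ≤ y → φ y ≤ D k - g / 2) ∧ (y ≤ m k - r → D k + g / 2 ≤ φ y) ∧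
        D (K - 1) - g / 2 ≤ φ y := by
  have hne : (Finset.range K).Nonempty := ⟨0, Finset.mem_range.2 hK⟩
  set ramp : ℕ → ℝ → ℝ := fun j y => max 0 (min 1 ((m j - y) / r))
  set φ : ℝ → ℝ := fun y =>
    D (K - 1) - g / 2 + (Finset.range K).sup' hne fun j => (D j - D (K - 1) + g) * ramp j y
  have hDlast : ∀ j < K, D (K - 1) ≤ D j := fun j hj =>
    le_of_le_of_forall_lt_add_le hg hD (by omega) (by omega)
  have hcoef : ∀ j < K, 0 ≤ D j - D (K - 1) + g := fun j hj => by linarith [hDlast j hj]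
  have hramp : ∀ j y, 0 ≤ ramp j y ∧ ramp j y ≤ 1 := fun j y =>
    ⟨le_max_left _ _, max_le zero_le_one (min_le_left _ _)⟩
  refine ⟨φ, ?_, fun k hk y => ⟨fun hy => ?_, fun hy => ?_, ?_⟩⟩
  · refine continuous_const.add (Continuous.finset_sup'_apply hne fun j _ => ?_)
    fun_prop
  · suffices (Finset.range K).sup' hne (fun j => (D j - D (K - 1) + g) * ramp j y)
        ≤ D k - D (K - 1) by simp only [φ]; linarith
    refine Finset.sup'_le _ _ fun j hj => ?_
    rw [Finset.mem_range] at hj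
    rcases le_or_gt j k with hjk | hkj
    · have hj0 : ramp j y = 0 := max_eq_left <| (min_le_right _ _).trans <|
        div_nonpos_of_nonpos_of_nonneg (by linarith [hm j k hjk hk]) hr.le
      rw [hj0, mul_zero]; linarith [hDlast k hk]
    · nlinarith [hD k j hkj hj, hramp j y, hcoef j hj]
  · have hk1 : ramp k y = 1 := by
      simp only [ramp]
      rw [min_eq_left ((le_div_iff₀ hr).2 (by linarith)), max_eq_right zero_le_one]
    have hle := Finset.le_sup' (fun j => (D j - D (K - 1) + g) * ramp j y) (Finset.mem_range.2 hk)
    rw [hk1, mul_one] at hle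
    simp only [φ]
    linarith
  · have hle := Finset.le_sup' (fun j => (D j - D (K - 1) + g) * ramp j y) (Finset.mem_range.2 hK)
    have hterm := mul_nonneg (hcoef 0 hK) (hramp 0 y).1
    simp only [φ]
    linarith

/-- A solution of the adaptive dynamics `x' = -c (x - vm) / (vM - vm)` on `[0, ∞)`, driven by an
interval `[vm t, vM t]` that takes the values `[vmk k, vMk k]`, `k < K`, and switches only at times
in `S`; `xd` is the derivative of `x` off `S`. -/
structure IsSwitchedTrajectory (K : ℕ) (c : ℝ) (vmk vMk : ℕ → ℝ) (vm vM : ℝ → ℝ) (S : Set ℝ)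
    (x xd : ℝ → ℝ) : Prop where
  lt : ∀ k < K, vmk k < vMk k
  state : ∀ t, 0 ≤ t → ∃ k < K, vm t = vmk k ∧ vM t = vMk k
  finite_switches : ∀ T, (S ∩ Icc 0 T).Finite
  eventually_eq : ∀ t, 0 ≤ t → t ∉ S → ∀ᶠ s in 𝓝 t, vm s = vm t ∧ vM s = vM t
  continuousOn : ContinuousOn x (Ici 0)
  hasDerivAt : ∀ t, 0 ≤ t → t ∉ S → HasDerivAt x (xd t) t
  deriv_eq : ∀ t, 0 ≤ t → t ∉ S → xd t = -c * ((x t - vm t) / (vM t - vm t))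

namespace IsSwitchedTrajectory

variable {K : ℕ} {c a b : ℝ} {vmk vMk : ℕ → ℝ} {vm vM : ℝ → ℝ} {S : Set ℝ} {x xd : ℝ → ℝ}

theorem countable_inter_Ioo (h : IsSwitchedTrajectory K c vmk vMk vm vM S x xd) (T : ℝ) :
    (S ∩ Ioo 0 T).Countable :=
  ((h.finite_switches T).subset (inter_subset_inter_right _ Ioo_subset_Icc_self)).countable

theorem ae_restrict_notMem (h : IsSwitchedTrajectory K c vmk vMk vm vM S x xd) (T : ℝ) :
    ∀ᵐ t ∂volume.restrict (Icc 0 T), 0 ≤ t ∧ t ∉ S := by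
  filter_upwards [ae_restrict_mem measurableSet_Icc,
    ae_restrict_of_ae ((h.finite_switches T).countable.ae_notMem volume)] with t ht htS
  exact ⟨ht.1, fun hS => htS ⟨hS, ht⟩⟩

theorem width_pos (h : IsSwitchedTrajectory K c vmk vMk vm vM S x xd) {t : ℝ} (ht : 0 ≤ t) :
    0 < vM t - vm t := by
  obtain ⟨k, hk, hvmk, hvMk⟩ := h.state t ht
  rw [hvmk, hvMk]
  exact sub_pos.2 (h.lt k hk)

theorem continuousAt_lower (h : IsSwitchedTrajectory K c vmk vMk vm vM S x xd) {t : ℝ}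
    (ht : 0 ≤ t) (htS : t ∉ S) : ContinuousAt vm t :=
  continuousAt_const.congr ((h.eventually_eq t ht htS).mono fun _ hs => hs.1.symm)

theorem continuousAt_upper (h : IsSwitchedTrajectory K c vmk vMk vm vM S x xd) {t : ℝ}
    (ht : 0 ≤ t) (htS : t ∉ S) : ContinuousAt vM t :=
  continuousAt_const.congr ((h.eventually_eq t ht htS).mono fun _ hs => hs.2.symm)

theorem continuousOn_deriv (h : IsSwitchedTrajectory K c vmk vMk vm vM S x xd) :
    ContinuousOn xd (Ici 0 \ S) := by
  refine ContinuousOn.congr (fun t ht => ?_) fun t ht => h.deriv_eq t ht.1 ht.2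
  have hvm := (h.continuousAt_lower ht.1 ht.2).continuousWithinAt (s := Ici 0 \ S)
  have hvM := (h.continuousAt_upper ht.1 ht.2).continuousWithinAt (s := Ici 0 \ S)
  exact continuousWithinAt_const.mul <| (((h.continuousOn t ht.1).mono sdiff_subset).sub hvm).div
    (hvM.sub hvm) (h.width_pos ht.1).ne'

theorem width_mul_deriv_eq (h : IsSwitchedTrajectory K c vmk vMk vm vM S x xd) {t : ℝ}
    (ht : 0 ≤ t) (htS : t ∉ S) : (vM t - vm t) * xd t = -c * (x t - vm t) := by
  have := (h.width_pos ht).ne'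
  rw [h.deriv_eq t ht htS]
  field_simp

theorem mem_Icc (h : IsSwitchedTrajectory K c vmk vMk vm vM S x xd) (hc : 0 ≤ c)
    (hab : ∀ k < K, vmk k ∈ Icc a b) (hx₀ : x 0 ∈ Icc a b) {t : ℝ} (ht : 0 ≤ t) :
    x t ∈ Icc a b := by
  have hsign : ∀ t, 0 ≤ t → t ∉ S → ∃ m ∈ Icc a b, ∃ D > 0, xd t = -c * ((x t - m) / D) :=
    fun t ht htS => by
      obtain ⟨k, hk, hvmk, hvMk⟩ := h.state t ht
      exact ⟨vmk k, hab k hk, vMk k - vmk k, sub_pos.2 (h.lt k hk),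
        by rw [h.deriv_eq t ht htS, hvmk, hvMk]⟩
  constructor
  · have := le_of_hasDerivAt_nonpos_of_lt (f := fun t => -x t) (b := -a) h.finite_switches
      h.continuousOn.neg (fun t ht htS => (h.hasDerivAt t ht htS).neg) (fun t ht htS hxt => by
        obtain ⟨m, hm, D, hD, hxd⟩ := hsign t ht htS
        rw [hxd, neg_mul, neg_neg]
        exact mul_nonpos_of_nonneg_of_nonpos hc (div_nonpos_of_nonpos_of_nonneg
          (by linarith [hm.1]) hD.le)) (neg_le_neg hx₀.1) ht
    exact neg_le_neg_iff.1 this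
  · refine le_of_hasDerivAt_nonpos_of_lt h.finite_switches h.continuousOn h.hasDerivAt
      (fun t ht htS hxt => ?_) hx₀.2 ht
    obtain ⟨m, hm, D, hD, hxd⟩ := hsign t ht htS
    rw [hxd, neg_mul]
    exact neg_nonpos.2 (mul_nonneg hc (div_nonneg (by linarith [hm.2]) hD.le))

theorem abs_width_mul_deriv_le (h : IsSwitchedTrajectory K c vmk vMk vm vM S x xd) (hc : 0 ≤ c)
    (hab : ∀ k < K, vmk k ∈ Icc a b) (hx : ∀ t, 0 ≤ t → x t ∈ Icc a b) {t : ℝ} (ht : 0 ≤ t)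
    (htS : t ∉ S) : |(vM t - vm t) * xd t| ≤ c * (b - a) := by
  obtain ⟨k, hk, hvmk, -⟩ := h.state t ht
  rw [h.width_mul_deriv_eq ht htS, abs_mul, abs_neg, abs_of_nonneg hc, hvmk]
  exact mul_le_mul_of_nonneg_left (abs_sub_le_iff.2
    ⟨by linarith [(hx t ht).2, (hab k hk).1], by linarith [(hx t ht).1, (hab k hk).2]⟩) hc

theorem abs_deriv_le (h : IsSwitchedTrajectory K c vmk vMk vm vM S x xd) (hc : 0 ≤ c)
    (hab : ∀ k < K, vmk k ∈ Icc a b) (hx : ∀ t, 0 ≤ t → x t ∈ Icc a b) {Dmin : ℝ}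
    (hDmin : 0 < Dmin) (hD : ∀ k < K, Dmin ≤ vMk k - vmk k) {t : ℝ} (ht : 0 ≤ t) (htS : t ∉ S) :
    |xd t| ≤ c * (b - a) / Dmin := by
  obtain ⟨k, hk, hvmk, hvMk⟩ := h.state t ht
  have hwidth : Dmin ≤ |vM t - vm t| := by
    rw [abs_of_pos (h.width_pos ht), hvmk, hvMk]; exact hD k hk
  rw [le_div_iff₀ hDmin]
  calc |xd t| * Dmin ≤ |xd t| * |vM t - vm t| := mul_le_mul_of_nonneg_left hwidth (abs_nonneg _)
    _ = |(vM t - vm t) * xd t| := by rw [abs_mul, mul_comm]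
    _ ≤ c * (b - a) := h.abs_width_mul_deriv_le hc hab hx ht htS

theorem intervalIntegrable_deriv (h : IsSwitchedTrajectory K c vmk vMk vm vM S x xd)
    (hc : 0 ≤ c) (hab : ∀ k < K, vmk k ∈ Icc a b) (hx : ∀ t, 0 ≤ t → x t ∈ Icc a b) {Dmin : ℝ}
    (hDmin : 0 < Dmin) (hD : ∀ k < K, Dmin ≤ vMk k - vmk k) {T : ℝ} (hT : 0 ≤ T) :
    IntervalIntegrable xd volume 0 T :=
  intervalIntegrable_of_continuousOn_sdiff_countable hT (h.countable_inter_Ioo T)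
    (h.continuousOn_deriv.mono fun _ ht => ⟨ht.1.1.le, ht.2⟩)
    fun _ ht => h.abs_deriv_le hc hab hx hDmin hD ht.1.1.le ht.2

theorem intervalIntegrable_width_mul_deriv (h : IsSwitchedTrajectory K c vmk vMk vm vM S x xd)
    (hc : 0 ≤ c) (hab : ∀ k < K, vmk k ∈ Icc a b) (hx : ∀ t, 0 ≤ t → x t ∈ Icc a b) {T : ℝ}
    (hT : 0 ≤ T) : IntervalIntegrable (fun t => (vM t - vm t) * xd t) volume 0 T := by
  refine intervalIntegrable_of_continuousOn_sdiff_countable hT (h.countable_inter_Ioo T) ?_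
    fun t ht => h.abs_width_mul_deriv_le hc hab hx ht.1.1.le ht.2
  refine ContinuousOn.congr (f := fun t => -c * (x t - vm t)) (fun t ht => ?_)
    fun t ht => h.width_mul_deriv_eq ht.1.1.le ht.2
  exact continuousWithinAt_const.mul <|
    ((h.continuousOn t ht.1.1.le).mono fun s hs => hs.1.1.le).sub
      (h.continuousAt_lower ht.1.1.le ht.2).continuousWithinAt

theorem intervalIntegrable_comp_mul_deriv (h : IsSwitchedTrajectory K c vmk vMk vm vM S x xd)
    {φ : ℝ → ℝ} (hφ : Continuous φ) {T : ℝ} (hT : 0 ≤ T) (hxd : IntervalIntegrable xd volume 0 T) :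
    IntervalIntegrable (fun t => φ (x t) * xd t) volume 0 T :=
  hxd.continuousOn_mul (hφ.comp_continuousOn
    (h.continuousOn.mono fun t ht => by rw [uIcc_of_le hT] at ht; exact ht.1))

theorem integral_comp_mul_deriv (h : IsSwitchedTrajectory K c vmk vMk vm vM S x xd)
    {φ Φ : ℝ → ℝ} (hφ : Continuous φ) (hΦ : ∀ y, HasDerivAt Φ (φ y) y) {T : ℝ} (hT : 0 ≤ T)
    (hxd : IntervalIntegrable xd volume 0 T) :
    ∫ t in 0..T, φ (x t) * xd t = Φ (x T) - Φ (x 0) := by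
  have hΦc : Continuous Φ := continuous_iff_continuousAt.2 fun y => (hΦ y).continuousAt
  exact integral_eq_of_hasDerivAt_off_countable_of_le (fun t => Φ (x t)) _ hT
    (h.countable_inter_Ioo T) (hΦc.comp_continuousOn (h.continuousOn.mono Icc_subset_Ici_self))
    (fun t ht => (hΦ (x t)).comp t (h.hasDerivAt t ht.1.1.le fun hS => ht.2 ⟨hS, ht.1⟩))
    (h.intervalIntegrable_comp_mul_deriv hφ hT hxd)

theorem integral_width_mul_deriv_le (h : IsSwitchedTrajectory K c vmk vMk vm vM S x xd)
    {φ Φ : ℝ → ℝ} (hφ : Continuous φ) (hΦ : ∀ y, HasDerivAt Φ (φ y) y) {κ δ T : ℝ} (hT : 0 ≤ T)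
    (hxd : IntervalIntegrable xd volume 0 T)
    (hw : IntervalIntegrable (fun t => (vM t - vm t) * xd t) volume 0 T)
    (hpt : ∀ t, 0 ≤ t → t ∉ S → (vM t - vm t) * xd t + κ * |xd t| ≤ φ (x t) * xd t + δ) :
    ∫ t in 0..T, (vM t - vm t) * xd t
      ≤ Φ (x T) - Φ (x 0) + δ * T - κ * ∫ t in 0..T, |xd t| := by
  have hφxd := h.intervalIntegrable_comp_mul_deriv hφ hT hxd
  have hmono := intervalIntegral.integral_mono_ae_restrict hT (hw.add (hxd.abs.const_mul κ))
    (hφxd.add intervalIntegrable_const) <| by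
      filter_upwards [h.ae_restrict_notMem T] with t ht using hpt t ht.1 ht.2
  rw [intervalIntegral.integral_add hw (hxd.abs.const_mul κ),
    intervalIntegral.integral_add hφxd intervalIntegrable_const,
    intervalIntegral.integral_const_mul, intervalIntegral.integral_const, smul_eq_mul,
    h.integral_comp_mul_deriv hφ hΦ hT hxd] at hmono
  linarith

theorem exists_integral_width_mul_deriv_le_of_potential
    (h : IsSwitchedTrajectory K c vmk vMk vm vM S x xd) (hc : 0 ≤ c)
    (hab : ∀ k < K, vmk k ∈ Icc a b) (hx : ∀ t, 0 ≤ t → x t ∈ Icc a b) {Dmin : ℝ}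
    (hDmin : 0 < Dmin) (hD : ∀ k < K, Dmin ≤ vMk k - vmk k) {φ : ℝ → ℝ} (hφ : Continuous φ)
    {κ δ : ℝ} (hpt : ∀ t, 0 ≤ t → t ∉ S → (vM t - vm t) * xd t + κ * |xd t| ≤ φ (x t) * xd t + δ) :
    ∃ C, ∀ T, 0 ≤ T →
      ∫ t in 0..T, (vM t - vm t) * xd t ≤ C + δ * T - κ * ∫ t in 0..T, |xd t| := by
  have hΦ : ∀ y, HasDerivAt (fun y => ∫ s in 0..y, φ s) (φ y) y := fun y =>
    (hφ.integral_hasStrictDerivAt 0 y).hasDerivAt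
  obtain ⟨C, hC⟩ := isCompact_Icc.exists_bound_of_continuousOn (s := Icc a b)
    (continuous_iff_continuousAt.2 fun y => (hΦ y).continuousAt).continuousOn
  refine ⟨2 * C, fun T hT => ?_⟩
  have hint := h.integral_width_mul_deriv_le hφ hΦ hT
    (h.intervalIntegrable_deriv hc hab hx hDmin hD hT)
    (h.intervalIntegrable_width_mul_deriv hc hab hx hT) hpt
  linarith [(abs_le.1 (hC (x T) (hx T hT))).2, (abs_le.1 (hC (x 0) (hx 0 le_rfl))).1]

theorem width_mul_deriv_add_abs_le (h : IsSwitchedTrajectory K c vmk vMk vm vM S x xd)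
    (hc : 0 ≤ c) {Dmin : ℝ} (hDmin : 0 < Dmin) (hD : ∀ k < K, Dmin ≤ vMk k - vmk k)
    {φ : ℝ → ℝ} {g r A : ℝ} (hr : 0 ≤ r) (hA : 0 ≤ A)
    (hφ : ∀ k < K, ∀ y, (vmk k ≤ y → φ y ≤ vMk k - vmk k - g / 2) ∧
      (y ≤ vmk k - r → vMk k - vmk k + g / 2 ≤ φ y) ∧ vMk k - vmk k + g / 2 - A ≤ φ y)
    {t : ℝ} (ht : 0 ≤ t) (htS : t ∉ S) :
    (vM t - vm t) * xd t + g / 2 * |xd t| ≤ φ (x t) * xd t + A * (c * r / Dmin) := by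
  obtain ⟨k, hk, hvmk, hvMk⟩ := h.state t ht
  obtain ⟨hright, hleft, hlow⟩ := hφ k hk (x t)
  have hDk := hD k hk
  have hdrift := mul_add_abs_le_of_drift hc (hDmin.trans_le hDk) hr hA
    ((h.deriv_eq t ht htS).trans (by rw [hvmk, hvMk])) hright hleft hlow
  have hslack : A * (c * r / (vMk k - vmk k)) ≤ A * (c * r / Dmin) :=
    mul_le_mul_of_nonneg_left (div_le_div_of_nonneg_left (by positivity) hDmin hDk) hA
  rw [hvmk, hvMk]
  linarith

theorem exists_integral_width_mul_deriv_le (h : IsSwitchedTrajectory K c vmk vMk vm vM S x xd)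
    (hc : 0 < c) (hK : 0 < K) (hm : ∀ j k, j ≤ k → k < K → vmk j ≤ vmk k) {g : ℝ} (hg : 0 ≤ g)
    (hgap : ∀ j k, j < k → k < K → vMk k - vmk k + g ≤ vMk j - vmk j)
    (hx : ∀ t, 0 ≤ t → x t ∈ Icc (vmk 0) (vmk (K - 1))) {δ : ℝ} (hδ : 0 < δ) :
    ∃ C, ∀ T, 0 ≤ T →
      ∫ t in 0..T, (vM t - vm t) * xd t ≤ C + δ * T - g / 2 * ∫ t in 0..T, |xd t| := by
  set D : ℕ → ℝ := fun k => vMk k - vmk k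
  have hDle : ∀ j k, j ≤ k → k < K → D k ≤ D j := fun j k => le_of_le_of_forall_lt_add_le hg hgap
  have hDmin : 0 < D (K - 1) := sub_pos.2 (h.lt _ (by omega))
  have hD : ∀ k < K, D (K - 1) ≤ D k := fun k hk => hDle k (K - 1) (by omega) (by omega)
  set A := D 0 - D (K - 1) + g
  have hA : 0 ≤ A := by linarith [hD 0 hK]
  set r := δ * D (K - 1) / (A * c + 1)
  have hr : 0 < r := by positivity
  have hslack : A * (c * r / D (K - 1)) ≤ δ := by
    calc A * (c * r / D (K - 1)) = δ * (A * c / (A * c + 1)) := by simp only [r]; field_simp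
      _ ≤ δ := mul_le_of_le_one_right hδ.le ((div_le_one (by positivity)).2 (by linarith))
  obtain ⟨φ, hφ, hφD⟩ := exists_continuous_potential hK hg hr hm hgap
  refine h.exists_integral_width_mul_deriv_le_of_potential hc.le
    (fun k hk => ⟨hm 0 k k.zero_le hk, hm k (K - 1) (by omega) (by omega)⟩) hx hDmin hD hφ
    fun t ht htS => ?_
  have := h.width_mul_deriv_add_abs_le hc.le hDmin hD hr.le hA (fun k hk y =>
    ⟨(hφD k hk y).1, (hφD k hk y).2.1, by linarith [(hφD k hk y).2.2, hDle 0 k k.zero_le hk]⟩)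
    ht htS
  linarith

theorem neg_le_average_width_mul_deriv (h : IsSwitchedTrajectory K c vmk vMk vm vM S x xd)
    (hc : 0 ≤ c) (hab : ∀ k < K, vmk k ∈ Icc a b) (hx : ∀ t, 0 ≤ t → x t ∈ Icc a b) {T : ℝ}
    (hT : 0 < T) : -(c * (b - a)) ≤ T⁻¹ * ∫ t in 0..T, (vM t - vm t) * xd t := by
  have hbound := intervalIntegral.norm_integral_le_of_norm_le_const_ae
    (f := fun t => (vM t - vm t) * xd t) (a := 0) (b := T) (C := c * (b - a)) <| by
      filter_upwards [(h.finite_switches T).countable.ae_notMem volume] with t htS hmem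
      rw [uIoc_of_le hT.le] at hmem
      exact h.abs_width_mul_deriv_le hc hab hx hmem.1.le
        fun hS => htS ⟨hS, Ioc_subset_Icc_self hmem⟩
  rw [Real.norm_eq_abs, sub_zero, abs_of_pos hT] at hbound
  rw [le_inv_mul_iff₀ hT]
  linarith [neg_abs_le (∫ t in 0..T, (vM t - vm t) * xd t)]

end IsSwitchedTrajectory

theorem revenue_inequivalence_decreasing_general (n K : ℕ) (hn : 2 ≤ n)
    (vmk vMk : ℕ → ℝ)
    (hlt : ∀ k < K, vmk k < vMk k)
    (hmono : ∀ k, k + 1 < K → vmk k < vmk (k + 1))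
    (hDmono : ∀ k, k + 1 < K → vMk (k + 1) - vmk (k + 1) < vMk k - vmk k)
    (vm vM : ℝ → ℝ)
    (hstate : ∀ t, 0 ≤ t → ∃ k < K, vm t = vmk k ∧ vM t = vMk k)
    (S : Set ℝ)
    (hSfin : ∀ T : ℝ, (S ∩ Set.Icc 0 T).Finite)
    (hpc : ∀ t, 0 ≤ t → t ∉ S → ∀ᶠ s in nhds t, vm s = vm t ∧ vM s = vM t)
    (x xd : ℝ → ℝ)
    (hx : ContinuousOn x (Set.Ici 0))
    (hode : ∀ t, 0 ≤ t → t ∉ S → HasDerivAt x (xd t) t)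
    (hform : ∀ t, 0 ≤ t → t ∉ S →
      xd t = -(1 / ((n : ℝ) * ((n : ℝ) - 1))) * ((x t - vm t) / (vM t - vm t)))
    (hx0 : x 0 ∈ Set.Icc (vmk 0) (vmk (K - 1)))
    (g : ℝ)
    (hg : IsLeast ((fun k => (vMk k - vmk k) - (vMk (k + 1) - vmk (k + 1))) ''
      {k | k + 1 < K}) g)
    (L : ℝ) (hLpos : 0 < L)
    (hL : liminf (fun T : ℝ => T⁻¹ * ∫ t in (0:ℝ)..T, |xd t|) atTop = L) :
    (limsup (fun T : ℝ => T⁻¹ * ∫ t in (0:ℝ)..T, (vM t - vm t) * xd t) atTop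
        ≤ -(L / 2 * g)
      ∧ -(L / 2 * g) < 0)
    ∧ limsup (fun T : ℝ =>
        T⁻¹ * ∫ t in (0:ℝ)..T, ((n : ℝ) - 1) / (n : ℝ) * ((vM t - vm t) * xd t)) atTop < 0 := by
  have hn' : (2 : ℝ) ≤ n := by exact_mod_cast hn
  have hc : 0 < 1 / ((n : ℝ) * ((n : ℝ) - 1)) := one_div_pos.2 (by nlinarith)
  have h : IsSwitchedTrajectory K _ vmk vMk vm vM S x xd :=
    ⟨hlt, hstate, hSfin, hpc, hx, hode, hform⟩
  obtain ⟨k₀, hk₀, hgk₀⟩ := hg.1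
  have hgpos : 0 < g := hgk₀ ▸ sub_pos.2 (hDmono k₀ hk₀)
  have hK : 0 < K := by have : k₀ + 1 < K := hk₀; omega
  have hgap : ∀ j k, j < k → k < K → vMk k - vmk k + g ≤ vMk j - vmk j := fun j k =>
    add_le_of_lt_of_forall_succ_add_le (f := fun k => vMk k - vmk k) hgpos.le
      fun k hk => by linarith [hg.2 ⟨k, hk, rfl⟩]
  have hm : ∀ j k, j ≤ k → k < K → vmk j ≤ vmk k := fun j k hjk hk =>
    (strictMonoOn_Iic_of_lt_succ (n := K - 1) fun k hk => hmono k (by omega)).monotoneOn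
      (by simp only [mem_Iic]; omega) (by simp only [mem_Iic]; omega) hjk
  have hab : ∀ k < K, vmk k ∈ Icc (vmk 0) (vmk (K - 1)) := fun k hk =>
    ⟨hm 0 k k.zero_le hk, hm k (K - 1) (by omega) (by omega)⟩
  have hxI := fun t (ht : 0 ≤ t) => h.mem_Icc hc.le hab hx0 ht
  have hbdd : IsBoundedUnder (· ≥ ·) atTop
      fun T : ℝ => T⁻¹ * ∫ t in (0:ℝ)..T, (vM t - vm t) * xd t :=
    ⟨_, eventually_map.2 <| (eventually_gt_atTop 0).mono fun T hT =>
      h.neg_le_average_width_mul_deriv hc.le hab hxI hT⟩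
  have hev := eventually_average_le (by positivity)
    (fun T hT => intervalIntegral.integral_nonneg hT fun _ _ => abs_nonneg _) hL
    fun δ hδ => h.exists_integral_width_mul_deriv_le hc hK hm hgpos.le hgap hxI hδ
  have hneg : -(L / 2 * g) < 0 := by nlinarith
  have hfac : 0 < ((n : ℝ) - 1) / n := div_pos (by linarith) (by linarith)
  refine ⟨⟨?_, hneg⟩, ?_⟩
  · rw [show -(L / 2 * g) = -(g / 2 * L) by ring]
    exact limsup_le_of_forall_pos_eventually_le hbdd hev
  · simp_rw [intervalIntegral.integral_const_mul, mul_left_comm _ (((n : ℝ) - 1) / n)]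
    exact (limsup_const_mul_le_of_forall_pos_eventually_le hfac hbdd hev).trans_lt
      (mul_neg_of_pos_of_neg hfac (by nlinarith))

/-- Revenue inequivalence under monotonic decrease of the interval widths
`Δv^(k)`: if the time-average path length of the adaptive dynamics has
`liminf = L > 0`, then the time-averaged revenue difference
`(1/T) ∫_0^T Δv(t) x'(t) dt` has `limsup ≤ -(L/2) min_k (Δv^(k) - Δv^(k+1)) < 0`,
so the time-averaged first-price payoff is strictly below the second-price one. -/
theorem revenue_inequivalence_decreasing (n K : ℕ) (hn : 2 ≤ n) (hK : 2 ≤ K)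
    (vmk vMk : ℕ → ℝ)
    (hlt : ∀ k < K, vmk k < vMk k)
    (hmono : ∀ k, k + 1 < K → vmk k < vmk (k + 1))
    (hDmono : ∀ k, k + 1 < K → vMk (k + 1) - vmk (k + 1) < vMk k - vmk k)
    (vm vM : ℝ → ℝ)
    (hstate : ∀ t, 0 ≤ t → ∃ k < K, vm t = vmk k ∧ vM t = vMk k)
    (S : Set ℝ)
    (hSfin : ∀ T : ℝ, (S ∩ Set.Icc 0 T).Finite)
    (hpc : ∀ t, 0 ≤ t → t ∉ S → ∀ᶠ s in nhds t, vm s = vm t ∧ vM s = vM t)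
    (x xd : ℝ → ℝ)
    (hx : ContinuousOn x (Set.Ici 0))
    (hode : ∀ t, 0 ≤ t → t ∉ S → HasDerivAt x (xd t) t)
    (hform : ∀ t, 0 ≤ t → t ∉ S →
      xd t = -(1 / ((n : ℝ) * ((n : ℝ) - 1))) * ((x t - vm t) / (vM t - vm t)))
    (hx0 : x 0 ∈ Set.Icc (vmk 0) (vmk (K - 1)))
    (g : ℝ)
    (hg : IsLeast ((fun k => (vMk k - vmk k) - (vMk (k + 1) - vmk (k + 1))) ''
      {k | k + 1 < K}) g)
    (L : ℝ) (hLpos : 0 < L)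
    (hL : liminf (fun T : ℝ => T⁻¹ * ∫ t in (0:ℝ)..T, |xd t|) atTop = L) :
    (limsup (fun T : ℝ => T⁻¹ * ∫ t in (0:ℝ)..T, (vM t - vm t) * xd t) atTop
        ≤ -(L / 2 * g)
      ∧ -(L / 2 * g) < 0)
    ∧ limsup (fun T : ℝ =>
        T⁻¹ * ∫ t in (0:ℝ)..T, ((n : ℝ) - 1) / (n : ℝ) * ((vM t - vm t) * xd t)) atTop < 0 :=
  revenue_inequivalence_decreasing_general n K hn vmk vMk hlt hmono hDmono vm vM hstate S hSfin hpc
    x xd hx hode hform hx0 g hg L hLpos hL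
end

section
/- Fix an integer n ≥ 2, an integer K ≥ 1, and a real Δc > 0. Let vm^(1) < ⋯ < vm^(K) be reals and set vM^(k) = vm^(k) + Δc for each k. Let (vm(t), vM(t)) be a piecewise-constant function of t ∈ [0,∞) taking values in {(vm^(k), vM^(k)) : 1 ≤ k ≤ K}, with finitely many switching times in each bounded interval, and let x : [0,∞) → ℝ be continuous, differentiable at every non-switching time, with x'(t) = −(1/(n(n−1)))·(x(t) − vm(t))/Δc there, and x(0) ∈ [vm^(1), vm^(K)]. Then lim_{T→∞} (1/T)·∫_0^T (vM(t) − vm(t))·x'(t) dt = 0; consequently the time-averaged expected payoff of each bidder in the first-price auction equals that in the second-price auction. -/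
/-!
With constant width `Δc` the integrand is `Δc · x'`, so the fundamental theorem of calculus
(which tolerates the countably many switching times) turns the integral into
`Δc · (x(T) - x(0))`. The dynamics `x' = -L (x - vm)` with `L ≥ 0` relax `x` towards the bounded
signal `vm`; the integrating factor `e^{Lt}` shows `|x(t)| ≤ |x(0)| + sup |vm|`, and a bounded
quantity divided by `T` tends to `0`.
-/

open MeasureTheory Filter Set

theorem integral_eq_sub_of_hasDerivAt_off_countable_of_norm_le {E : Type*}
    [NormedAddCommGroup E] [NormedSpace ℝ E] [CompleteSpace E] {f f' : ℝ → E} {a b C : ℝ}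
    {s : Set ℝ} (hab : a ≤ b) (hs : s.Countable) (hf : ContinuousOn f (Icc a b))
    (hderiv : ∀ t ∈ Ioo a b \ s, HasDerivAt f (f' t) t)
    (hbound : ∀ t ∈ Ioo a b \ s, ‖f' t‖ ≤ C) :
    ∫ t in a..b, f' t = f b - f a := by
  have hae : ∀ᵐ t ∂volume.restrict (Ioc a b), t ∈ Ioo a b \ s := by
    filter_upwards [ae_restrict_mem measurableSet_Ioc,
      ae_restrict_of_ae ((hs.insert b).ae_notMem volume)] with t ht htbs
    exact ⟨⟨ht.1, ht.2.lt_of_ne fun h => htbs (.inl h)⟩, fun h => htbs (.inr h)⟩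
  refine integral_eq_of_hasDerivAt_off_countable_of_le f f' hab hs hf hderiv ?_
  rw [intervalIntegrable_iff_integrableOn_Ioc_of_le hab]
  -- `f'` agrees a.e. with `deriv f`, which is measurable whatever `f` is.
  refine Integrable.mono' (integrable_const C) ?_ (hae.mono fun t ht => hbound t ht)
  exact (aestronglyMeasurable_deriv f _).congr (hae.mono fun t ht => (hderiv t ht).deriv)

section Relaxation

variable {x x' v : ℝ → ℝ} {L M a b : ℝ} {s : Set ℝ}

theorem integral_eq_sub_of_relaxation (hab : a ≤ b) (hs : s.Countable)
    (hx : ContinuousOn x (Icc a b)) (hderiv : ∀ t ∈ Ioo a b \ s, HasDerivAt x (x' t) t)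
    (hrelax : ∀ t ∈ Ioo a b \ s, x' t = -L * (x t - v t)) (hv : ∀ t ∈ Icc a b, |v t| ≤ M) :
    ∫ t in a..b, x' t = x b - x a := by
  obtain ⟨B, hB⟩ := isCompact_Icc.exists_bound_of_continuousOn hx
  refine integral_eq_sub_of_hasDerivAt_off_countable_of_norm_le (C := |L| * (B + M))
    hab hs hx hderiv fun t ht => ?_
  have htI : t ∈ Icc a b := Ioo_subset_Icc_self ht.1
  rw [hrelax t ht, norm_mul, norm_neg, Real.norm_eq_abs]
  gcongr
  exact (norm_sub_le _ _).trans (add_le_add (hB t htI) (hv t htI))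

theorem abs_le_abs_add_of_relaxation (hL : 0 ≤ L) (hab : a ≤ b) (hs : s.Countable)
    (hx : ContinuousOn x (Icc a b)) (hderiv : ∀ t ∈ Ioo a b \ s, HasDerivAt x (x' t) t)
    (hrelax : ∀ t ∈ Ioo a b \ s, x' t = -L * (x t - v t)) (hv : ∀ t ∈ Icc a b, |v t| ≤ M) :
    |x b| ≤ |x a| + M := by
  have hexp : ∀ t, HasDerivAt (fun t => Real.exp (L * t)) (Real.exp (L * t) * L) t := fun t => by
    simpa using ((hasDerivAt_id t).const_mul L).exp
  have hdamped : ∀ t ∈ Icc a b, |Real.exp (L * t) * L * v t| ≤ Real.exp (L * t) * L * M :=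
    fun t ht => by
      rw [abs_mul, abs_of_nonneg (by positivity)]
      exact mul_le_mul_of_nonneg_left (hv t ht) (by positivity)
  have hftc : ∫ t in a..b, Real.exp (L * t) * L * v t
      = Real.exp (L * b) * x b - Real.exp (L * a) * x a := by
    refine integral_eq_sub_of_hasDerivAt_off_countable_of_norm_le
      (C := Real.exp (L * b) * L * M) hab hs
      ((by fun_prop : Continuous fun t => Real.exp (L * t)).continuousOn.mul hx)
      (fun t ht => ?_) fun t ht => ?_
    · exact ((hexp t).mul (hderiv t ht)).congr_deriv (by rw [hrelax t ht]; ring)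
    · have htI : t ∈ Icc a b := Ioo_subset_Icc_self ht.1
      refine (hdamped t htI).trans ?_
      gcongr
      · exact (abs_nonneg _).trans (hv t htI)
      · exact htI.2
  have hexp_integral : ∫ t in a..b, Real.exp (L * t) * L * M
      = M * (Real.exp (L * b) - Real.exp (L * a)) := by
    rw [intervalIntegral.integral_mul_const, intervalIntegral.integral_eq_sub_of_hasDerivAt
      (fun t _ => hexp t)
      ((by fun_prop : Continuous fun t => Real.exp (L * t) * L).intervalIntegrable _ _), mul_comm]
  have hincrement : |Real.exp (L * b) * x b - Real.exp (L * a) * x a|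
      ≤ M * (Real.exp (L * b) - Real.exp (L * a)) := by
    rw [← hftc, ← hexp_integral, ← Real.norm_eq_abs]
    refine intervalIntegral.norm_integral_le_of_norm_le hab (ae_of_all _ fun t ht => ?_)
      ((by fun_prop : Continuous fun t => Real.exp (L * t) * L * M).intervalIntegrable _ _)
    exact hdamped t (Ioc_subset_Icc_self ht)
  have hM : 0 ≤ M := (abs_nonneg _).trans (hv a (left_mem_Icc.2 hab))
  have hea : 0 < Real.exp (L * a) := Real.exp_pos _
  have hab_exp : Real.exp (L * a) ≤ Real.exp (L * b) := by gcongr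
  have htriangle := abs_sub_abs_le_abs_sub (Real.exp (L * b) * x b) (Real.exp (L * a) * x a)
  rw [abs_mul, abs_mul, abs_of_pos (Real.exp_pos _), abs_of_pos hea] at htriangle
  refine le_of_mul_le_mul_left ?_ (Real.exp_pos (L * b))
  nlinarith [abs_nonneg (x a)]

end Relaxation

theorem revenue_equivalence_fixed_width_general (n K : ℕ)
    (Dc : ℝ) (hDc : 0 < Dc)
    (vmk : ℕ → ℝ)
    (vm vM : ℝ → ℝ)
    (hstate : ∀ t, 0 ≤ t → ∃ k < K, vm t = vmk k ∧ vM t = vmk k + Dc)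
    (S : Set ℝ)
    (hSfin : ∀ T : ℝ, (S ∩ Set.Icc 0 T).Finite)
    (x xd : ℝ → ℝ)
    (hx : ContinuousOn x (Set.Ici 0))
    (hode : ∀ t, 0 ≤ t → t ∉ S → HasDerivAt x (xd t) t)
    (hform : ∀ t, 0 ≤ t → t ∉ S →
      xd t = -(1 / ((n : ℝ) * ((n : ℝ) - 1))) * ((x t - vm t) / Dc)) :
    Tendsto (fun T : ℝ => T⁻¹ * ∫ t in (0:ℝ)..T, (vM t - vm t) * xd t) atTop (nhds 0)
    ∧ Tendsto (fun T : ℝ =>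
        T⁻¹ * ∫ t in (0:ℝ)..T, ((n : ℝ) - 1) / (n : ℝ) * ((vM t - vm t) * xd t))
        atTop (nhds 0) := by
  set L := 1 / ((n : ℝ) * ((n : ℝ) - 1)) / Dc
  have hL : 0 ≤ L := by
    have : (0 : ℝ) ≤ n * (n - 1) := by rcases n with _ | n <;> simp; positivity
    positivity
  set M := ∑ k ∈ Finset.range K, |vmk k|
  have hM : ∀ t, 0 ≤ t → |vm t| ≤ M := fun t ht => by
    obtain ⟨k, hk, hvm, -⟩ := hstate t ht
    exact hvm ▸ Finset.single_le_sum (fun k _ => abs_nonneg (vmk k)) (Finset.mem_range.2 hk)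
  have hgood : ∀ T, ∀ t ∈ Ioo 0 T \ (S ∩ Icc 0 T), 0 ≤ t ∧ t ∉ S := fun T t ht =>
    ⟨ht.1.1.le, fun htS => ht.2 ⟨htS, Ioo_subset_Icc_self ht.1⟩⟩
  have hderiv : ∀ T, ∀ t ∈ Ioo 0 T \ (S ∩ Icc 0 T), HasDerivAt x (xd t) t := fun T t ht =>
    hode t (hgood T t ht).1 (hgood T t ht).2
  have hrelax : ∀ T, ∀ t ∈ Ioo 0 T \ (S ∩ Icc 0 T), xd t = -L * (x t - vm t) := fun T t ht => by
    rw [hform t (hgood T t ht).1 (hgood T t ht).2]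
    ring
  have hintegral : ∀ T, 0 ≤ T → ∫ t in (0:ℝ)..T, (vM t - vm t) * xd t = Dc * (x T - x 0) :=
    fun T hT => by
      rw [← integral_eq_sub_of_relaxation hT (hSfin T).countable (hx.mono Icc_subset_Ici_self)
        (hderiv T) (hrelax T) (fun t ht => hM t ht.1), ← intervalIntegral.integral_const_mul]
      refine intervalIntegral.integral_congr fun t ht => ?_
      obtain ⟨k, -, hvm, hvM⟩ := hstate t (uIcc_of_le hT ▸ ht).1
      simp only [hvm, hvM, add_sub_cancel_left]
  have hbounded : ∀ T, 0 ≤ T → |∫ t in (0:ℝ)..T, (vM t - vm t) * xd t| ≤ Dc * (2 * |x 0| + M) :=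
    fun T hT => by
      have hxT := abs_le_abs_add_of_relaxation hL hT (hSfin T).countable
        (hx.mono Icc_subset_Ici_self) (hderiv T) (hrelax T) (fun t ht => hM t ht.1)
      rw [hintegral T hT, abs_mul, abs_of_pos hDc]
      gcongr
      linarith [abs_sub (x T) (x 0)]
  have hlim : Tendsto (fun T : ℝ => T⁻¹ * ∫ t in (0:ℝ)..T, (vM t - vm t) * xd t) atTop (nhds 0) :=
    tendsto_inv_atTop_zero.zero_mul_isBoundedUnder_le
      (isBoundedUnder_of_eventually_le ((eventually_ge_atTop 0).mono hbounded))
  refine ⟨hlim, ?_⟩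
  refine (mul_zero (((n : ℝ) - 1) / n) ▸ hlim.const_mul (((n : ℝ) - 1) / n)).congr fun T => ?_
  rw [intervalIntegral.integral_const_mul]
  ring

/-- Revenue equivalence under fixed interval width `Δc`: when all states share the
same width `vM^(k) - vm^(k) = Δc`, the time average
`(1/T) ∫_0^T (vM(t) - vm(t)) x'(t) dt → 0`, so the time-averaged first-price and
second-price payoffs coincide. -/
theorem revenue_equivalence_fixed_width (n K : ℕ) (hn : 2 ≤ n) (hK : 1 ≤ K)
    (Dc : ℝ) (hDc : 0 < Dc)
    (vmk : ℕ → ℝ)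
    (hmono : ∀ k, k + 1 < K → vmk k < vmk (k + 1))
    (vm vM : ℝ → ℝ)
    (hstate : ∀ t, 0 ≤ t → ∃ k < K, vm t = vmk k ∧ vM t = vmk k + Dc)
    (S : Set ℝ)
    (hSfin : ∀ T : ℝ, (S ∩ Set.Icc 0 T).Finite)
    (hpc : ∀ t, 0 ≤ t → t ∉ S → ∀ᶠ s in nhds t, vm s = vm t ∧ vM s = vM t)
    (x xd : ℝ → ℝ)
    (hx : ContinuousOn x (Set.Ici 0))
    (hode : ∀ t, 0 ≤ t → t ∉ S → HasDerivAt x (xd t) t)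
    (hform : ∀ t, 0 ≤ t → t ∉ S →
      xd t = -(1 / ((n : ℝ) * ((n : ℝ) - 1))) * ((x t - vm t) / Dc))
    (hx0 : x 0 ∈ Set.Icc (vmk 0) (vmk (K - 1))) :
    Tendsto (fun T : ℝ => T⁻¹ * ∫ t in (0:ℝ)..T, (vM t - vm t) * xd t) atTop (nhds 0)
    ∧ Tendsto (fun T : ℝ =>
        T⁻¹ * ∫ t in (0:ℝ)..T, ((n : ℝ) - 1) / (n : ℝ) * ((vM t - vm t) * xd t))
        atTop (nhds 0) :=
  revenue_equivalence_fixed_width_general n K Dc hDc vmk vm vM hstate S hSfin x xd hx hode hform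
end

section
/- Fix an integer n ≥ 2 and two pairs of reals (vm^(1), vM^(1)), (vm^(2), vM^(2)) with vm^(1) < vM^(1), vm^(2) < vM^(2), and vm^(1) < vm^(2); write Δv^(k) = vM^(k) − vm^(k). Let (vm(t), vM(t)) be a piecewise-constant function of t ∈ [0,∞) taking values in {(vm^(1), vM^(1)), (vm^(2), vM^(2))}, with finitely many switching times in each bounded interval, and let x : [0,∞) → ℝ be continuous, differentiable at every non-switching time, with x'(t) = −(1/(n(n−1)))·(x(t) − vm(t))/(vM(t) − vm(t)) there, and x(0) ∈ [vm^(1), vm^(2)]. Then there exists a constant C ≥ 0, independent of T, such that for all T > 0: | ∫_0^T (vM(t) − vm(t))·x'(t) dt − (1/2)·(Δv^(2) − Δv^(1))·∫_0^T |x'(t)| dt | ≤ C. In particular, if lim_{T→∞} (1/T)·∫_0^T |x'(t)| dt = L exists, then lim_{T→∞} (1/T)·∫_0^T (vM(t) − vm(t))·x'(t) dt = (1/2)·(Δv^(2) − Δv^(1))·L, so the difference between the time-averaged first-price and second-price payoffs equals ((n−1)/n)·(1/2)·(Δv^(2) − Δv^(1))·L exactly. -/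
/-!
A last-exit-time argument keeps `x` in `[vm₁, vm₂]`, because the drift points back into that
interval in both states. Hence `x` decreases exactly in state 1 and increases exactly in state 2,
so pointwise `Δv · x' = ½(Δv₂ - Δv₁)|x'| + ½(Δv₁ + Δv₂)x'`. Integrating, the last term telescopes
to `½(Δv₁ + Δv₂)(x T - x 0)`, which is bounded by `½(Δv₁ + Δv₂)(vm₂ - vm₁)` and vanishes after
division by `T`.
-/

open MeasureTheory Filter Set

theorem intervalIntegrable_of_hasDerivAt_of_abs_le {f f' g : ℝ → ℝ} {a b : ℝ} {s : Set ℝ}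
    (hs : s.Countable) (hab : a ≤ b) (hf : ∀ t ∈ Ioo a b \ s, HasDerivAt f (f' t) t)
    (hg : IntervalIntegrable g volume a b) (hbound : ∀ t ∈ Ioo a b \ s, |f' t| ≤ g t) :
    IntervalIntegrable f' volume a b := by
  rw [intervalIntegrable_iff_integrableOn_Ioo_of_le hab] at hg ⊢
  have hgood : ∀ᵐ t ∂volume.restrict (Ioo a b), t ∈ Ioo a b \ s := by
    filter_upwards [ae_restrict_mem measurableSet_Ioo, ae_restrict_of_ae (hs.ae_notMem volume)]
      with t ht hts using ⟨ht, hts⟩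
  have hderiv : deriv f =ᵐ[volume.restrict (Ioo a b)] f' :=
    hgood.mono fun t ht => (hf t ht).deriv
  refine hg.mono' ((measurable_deriv f).aestronglyMeasurable.congr hderiv) ?_
  exact hgood.mono fun t ht => hbound t ht

theorem image_le_of_hasDerivAt_nonpos_above {f f' : ℝ → ℝ} {a b K : ℝ} {s : Set ℝ}
    (hs : s.Countable) (hab : a ≤ b) (hf : ContinuousOn f (Icc a b))
    (hderiv : ∀ t ∈ Ioo a b \ s, HasDerivAt f (f' t) t)
    (hint : IntervalIntegrable f' volume a b)
    (hsign : ∀ t ∈ Ioo a b \ s, K < f t → f' t ≤ 0) (ha : f a ≤ K) : f b ≤ K := by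
  by_contra! hb
  set A := Icc a b ∩ f ⁻¹' Iic K
  have hA : IsClosed A := hf.preimage_isClosed_of_isClosed isClosed_Icc isClosed_Iic
  obtain ⟨⟨hac, hcb⟩, hc : f (sSup A) ≤ K⟩ : sSup A ∈ A :=
    hA.csSup_mem ⟨a, ⟨le_rfl, hab⟩, ha⟩ ⟨b, fun t ht => ht.1.2⟩
  set c := sSup A
  -- `c` is the last time in `[a, b]` at which `f ≤ K`.
  have habove : ∀ t ∈ Ioc c b, K < f t := fun t ht => by
    by_contra! htK
    have htA : t ∈ A := ⟨⟨hac.trans ht.1.le, ht.2⟩, htK⟩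
    exact (le_csSup ⟨b, fun u hu => hu.1.2⟩ htA).not_gt ht.1
  have hftc : ∫ t in c..b, f' t = f b - f c :=
    integral_eq_of_hasDerivAt_off_countable_of_le f f' hcb hs (hf.mono (Icc_subset_Icc hac le_rfl))
      (fun t ht => hderiv t ⟨⟨hac.trans_lt ht.1.1, ht.1.2⟩, ht.2⟩)
      (hint.mono_set (by rw [uIcc_of_le hcb, uIcc_of_le hab]; exact Icc_subset_Icc hac le_rfl))
  have hnonpos : ∫ t in c..b, f' t ≤ 0 := by
    rw [intervalIntegral.integral_of_le hcb, integral_Ioc_eq_integral_Ioo]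
    refine integral_nonpos_of_ae ?_
    filter_upwards [ae_restrict_mem measurableSet_Ioo, ae_restrict_of_ae (hs.ae_notMem volume)]
      with t ht hts
    exact hsign t ⟨⟨hac.trans_lt ht.1, ht.2⟩, hts⟩ (habove t (Ioo_subset_Ioc_self ht))
  linarith

theorem two_state_width_mul_eq {m1 M1 m2 M2 m M d : ℝ}
    (h : (m = m1 ∧ M = M1 ∧ d ≤ 0) ∨ (m = m2 ∧ M = M2 ∧ 0 ≤ d)) :
    (M - m) * d = 1 / 2 * ((M2 - m2) - (M1 - m1)) * |d| + 1 / 2 * ((M1 - m1) + (M2 - m2)) * d := by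
  rcases h with ⟨rfl, rfl, hd⟩ | ⟨rfl, rfl, hd⟩
  · rw [abs_of_nonpos hd]; ring
  · rw [abs_of_nonneg hd]; ring

theorem tendsto_inv_mul_of_abs_sub_le {F G : ℝ → ℝ} {a L C : ℝ}
    (hG : Tendsto (fun T => T⁻¹ * G T) atTop (nhds L))
    (hFG : ∀ᶠ T in atTop, |F T - a * G T| ≤ C) :
    Tendsto (fun T => T⁻¹ * F T) atTop (nhds (a * L)) := by
  have herr : Tendsto (fun T => T⁻¹ * (F T - a * G T)) atTop (nhds 0) :=
    tendsto_inv_atTop_zero.zero_mul_isBoundedUnder_le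
      ⟨C, by simpa only [eventually_map, Function.comp_apply, Real.norm_eq_abs] using hFG⟩
  have hsum := (hG.const_mul a).add herr
  rw [add_zero] at hsum
  refine hsum.congr fun T => ?_
  ring

structure IsTwoStateDynamics (c vm1 vM1 vm2 vM2 : ℝ) (vm vM : ℝ → ℝ) (S : Set ℝ)
    (x xd : ℝ → ℝ) : Prop where
  state : ∀ t, 0 ≤ t → (vm t = vm1 ∧ vM t = vM1) ∨ (vm t = vm2 ∧ vM t = vM2)
  finite_switches : ∀ T : ℝ, (S ∩ Icc 0 T).Finite
  continuousOn : ContinuousOn x (Ici 0)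
  hasDerivAt : ∀ t, 0 ≤ t → t ∉ S → HasDerivAt x (xd t) t
  eq_drift : ∀ t, 0 ≤ t → t ∉ S → xd t = -c * ((x t - vm t) / (vM t - vm t))

namespace IsTwoStateDynamics

variable {c vm1 vM1 vm2 vM2 : ℝ} {vm vM : ℝ → ℝ} {S : Set ℝ} {x xd : ℝ → ℝ}

theorem countable_switches (h : IsTwoStateDynamics c vm1 vM1 vm2 vM2 vm vM S x xd) :
    (S ∩ Ici 0).Countable := by
  refine (countable_iUnion fun k : ℕ => (h.finite_switches k).countable).mono ?_
  rintro t ⟨htS, ht0⟩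
  obtain ⟨k, hk⟩ := exists_nat_ge t
  exact mem_iUnion.2 ⟨k, htS, ht0, hk⟩

theorem vm_mem_Icc (h : IsTwoStateDynamics c vm1 vM1 vm2 vM2 vm vM S x xd) (h12 : vm1 ≤ vm2)
    {t : ℝ} (ht : 0 ≤ t) : vm t ∈ Icc vm1 vm2 := by
  rcases h.state t ht with ⟨e, -⟩ | ⟨e, -⟩ <;> rw [e]
  exacts [⟨le_rfl, h12⟩, ⟨h12, le_rfl⟩]

theorem width_pos (h : IsTwoStateDynamics c vm1 vM1 vm2 vM2 vm vM S x xd) (h1 : vm1 < vM1)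
    (h2 : vm2 < vM2) {t : ℝ} (ht : 0 ≤ t) : 0 < vM t - vm t := by
  rcases h.state t ht with ⟨e, e'⟩ | ⟨e, e'⟩ <;> rw [e, e'] <;> linarith

theorem drift_nonpos (h : IsTwoStateDynamics c vm1 vM1 vm2 vM2 vm vM S x xd) (hc : 0 ≤ c)
    (h1 : vm1 < vM1) (h2 : vm2 < vM2) {t : ℝ} (ht : 0 ≤ t) (htS : t ∉ S) (hx : vm t ≤ x t) :
    xd t ≤ 0 := by
  rw [h.eq_drift t ht htS, neg_mul]
  exact neg_nonpos.2 (mul_nonneg hc (div_nonneg (sub_nonneg.2 hx) (h.width_pos h1 h2 ht).le))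

theorem drift_nonneg (h : IsTwoStateDynamics c vm1 vM1 vm2 vM2 vm vM S x xd) (hc : 0 ≤ c)
    (h1 : vm1 < vM1) (h2 : vm2 < vM2) {t : ℝ} (ht : 0 ≤ t) (htS : t ∉ S) (hx : x t ≤ vm t) :
    0 ≤ xd t := by
  rw [h.eq_drift t ht htS, neg_mul, neg_nonneg]
  exact mul_nonpos_of_nonneg_of_nonpos hc
    (div_nonpos_of_nonpos_of_nonneg (sub_nonpos.2 hx) (h.width_pos h1 h2 ht).le)

theorem intervalIntegrable (h : IsTwoStateDynamics c vm1 vM1 vm2 vM2 vm vM S x xd) {T : ℝ}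
    (hT : 0 ≤ T) : IntervalIntegrable xd volume 0 T := by
  have hxT : ContinuousOn x (uIcc 0 T) := h.continuousOn.mono fun t ht => by
    rw [uIcc_of_le hT] at ht; exact ht.1
  -- In either state, `|xd t|` is dominated by the sum of the two continuous candidate drifts.
  refine intervalIntegrable_of_hasDerivAt_of_abs_le (g := fun t =>
      |c| * (|(x t - vm1) / (vM1 - vm1)| + |(x t - vm2) / (vM2 - vm2)|)) h.countable_switches hT
    (fun t ht => h.hasDerivAt t ht.1.1.le fun htS => ht.2 ⟨htS, ht.1.1.le⟩)
    (ContinuousOn.intervalIntegrable (by fun_prop)) fun t ht => ?_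
  have ht0 : 0 ≤ t := ht.1.1.le
  rw [h.eq_drift t ht0 fun htS => ht.2 ⟨htS, ht0⟩, abs_mul, abs_neg]
  gcongr
  rcases h.state t ht0 with ⟨e, e'⟩ | ⟨e, e'⟩ <;> rw [e, e'] <;> simp

theorem mem_Icc (h : IsTwoStateDynamics c vm1 vM1 vm2 vM2 vm vM S x xd) (hc : 0 ≤ c)
    (h1 : vm1 < vM1) (h2 : vm2 < vM2) (h12 : vm1 ≤ vm2) (hx0 : x 0 ∈ Icc vm1 vm2) {T : ℝ}
    (hT : 0 ≤ T) : x T ∈ Icc vm1 vm2 := by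
  have hxT : ContinuousOn x (Icc 0 T) := h.continuousOn.mono Icc_subset_Ici_self
  have hgood : ∀ t ∈ Ioo 0 T \ (S ∩ Ici 0), 0 ≤ t ∧ t ∉ S := fun t ht =>
    ⟨ht.1.1.le, fun htS => ht.2 ⟨htS, ht.1.1.le⟩⟩
  have hderiv : ∀ t ∈ Ioo 0 T \ (S ∩ Ici 0), HasDerivAt x (xd t) t := fun t ht =>
    h.hasDerivAt t (hgood t ht).1 (hgood t ht).2
  constructor
  · have hlow := image_le_of_hasDerivAt_nonpos_above (f := fun t => -x t) (f' := fun t => -xd t)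
      (K := -vm1) h.countable_switches hT hxT.neg (fun t ht => (hderiv t ht).neg)
      (h.intervalIntegrable hT).neg (fun t ht hlt => ?_) (neg_le_neg hx0.1)
    · exact neg_le_neg_iff.1 hlow
    obtain ⟨ht0, htS⟩ := hgood t ht
    exact neg_nonpos.2 <| h.drift_nonneg hc h1 h2 ht0 htS <|
      (lt_of_neg_lt_neg hlt).le.trans (h.vm_mem_Icc h12 ht0).1
  · refine image_le_of_hasDerivAt_nonpos_above h.countable_switches hT hxT hderiv
      (h.intervalIntegrable hT) (fun t ht hlt => ?_) hx0.2
    obtain ⟨ht0, htS⟩ := hgood t ht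
    exact h.drift_nonpos hc h1 h2 ht0 htS ((h.vm_mem_Icc h12 ht0).2.trans hlt.le)

theorem integral_width_mul_eq (h : IsTwoStateDynamics c vm1 vM1 vm2 vM2 vm vM S x xd)
    (hc : 0 ≤ c) (h1 : vm1 < vM1) (h2 : vm2 < vM2) (h12 : vm1 ≤ vm2) (hx0 : x 0 ∈ Icc vm1 vm2)
    {T : ℝ} (hT : 0 ≤ T) :
    ∫ t in (0:ℝ)..T, (vM t - vm t) * xd t =
      1 / 2 * ((vM2 - vm2) - (vM1 - vm1)) * (∫ t in (0:ℝ)..T, |xd t|)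
        + 1 / 2 * ((vM1 - vm1) + (vM2 - vm2)) * (x T - x 0) := by
  have hint := h.intervalIntegrable hT
  have hpointwise : ∀ᵐ t, t ∈ uIoc 0 T → (vM t - vm t) * xd t =
      1 / 2 * ((vM2 - vm2) - (vM1 - vm1)) * |xd t| + 1 / 2 * ((vM1 - vm1) + (vM2 - vm2)) * xd t := by
    filter_upwards [h.countable_switches.ae_notMem volume] with t htS ht
    rw [uIoc_of_le hT] at ht
    have ht0 : 0 ≤ t := ht.1.le
    replace htS : t ∉ S := fun htS' => htS ⟨htS', ht0⟩
    have hxt := h.mem_Icc hc h1 h2 h12 hx0 ht0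
    refine two_state_width_mul_eq ?_
    rcases h.state t ht0 with ⟨e, e'⟩ | ⟨e, e'⟩
    · exact Or.inl ⟨e, e', h.drift_nonpos hc h1 h2 ht0 htS (e ▸ hxt.1)⟩
    · exact Or.inr ⟨e, e', h.drift_nonneg hc h1 h2 ht0 htS (e ▸ hxt.2)⟩
  rw [intervalIntegral.integral_congr_ae hpointwise,
    intervalIntegral.integral_add (hint.abs.const_mul _) (hint.const_mul _),
    intervalIntegral.integral_const_mul, intervalIntegral.integral_const_mul,
    integral_eq_of_hasDerivAt_off_countable_of_le x xd hT h.countable_switches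
      (h.continuousOn.mono Icc_subset_Ici_self)
      (fun t ht => h.hasDerivAt t ht.1.1.le fun htS => ht.2 ⟨htS, ht.1.1.le⟩) hint]

theorem abs_integral_width_mul_sub_le (h : IsTwoStateDynamics c vm1 vM1 vm2 vM2 vm vM S x xd)
    (hc : 0 ≤ c) (h1 : vm1 < vM1) (h2 : vm2 < vM2) (h12 : vm1 ≤ vm2) (hx0 : x 0 ∈ Icc vm1 vm2)
    {T : ℝ} (hT : 0 ≤ T) :
    abs ((∫ t in (0:ℝ)..T, (vM t - vm t) * xd t)
        - 1 / 2 * ((vM2 - vm2) - (vM1 - vm1)) * ∫ t in (0:ℝ)..T, |xd t|)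
      ≤ 1 / 2 * ((vM1 - vm1) + (vM2 - vm2)) * (vm2 - vm1) := by
  have hxT := h.mem_Icc hc h1 h2 h12 hx0 hT
  rw [h.integral_width_mul_eq hc h1 h2 h12 hx0 hT, add_sub_cancel_left, abs_mul,
    abs_of_pos (by linarith)]
  gcongr
  exact abs_sub_le_of_le_of_le hxT.1 hxT.2 hx0.1 hx0.2

end IsTwoStateDynamics

theorem two_state_exact_revenue_difference_general (n : ℕ)
    (vm1 vM1 vm2 vM2 : ℝ) (h1 : vm1 < vM1) (h2 : vm2 < vM2) (h12 : vm1 < vm2)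
    (vm vM : ℝ → ℝ)
    (hstate : ∀ t, 0 ≤ t → (vm t = vm1 ∧ vM t = vM1) ∨ (vm t = vm2 ∧ vM t = vM2))
    (S : Set ℝ)
    (hSfin : ∀ T : ℝ, (S ∩ Set.Icc 0 T).Finite)
    (x xd : ℝ → ℝ)
    (hx : ContinuousOn x (Set.Ici 0))
    (hode : ∀ t, 0 ≤ t → t ∉ S → HasDerivAt x (xd t) t)
    (hform : ∀ t, 0 ≤ t → t ∉ S →
      xd t = -(1 / ((n : ℝ) * ((n : ℝ) - 1))) * ((x t - vm t) / (vM t - vm t)))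
    (hx0 : x 0 ∈ Set.Icc vm1 vm2) :
    (∃ C, 0 ≤ C ∧ ∀ T > (0 : ℝ),
        abs ((∫ t in (0:ℝ)..T, (vM t - vm t) * xd t)
            - 1 / 2 * ((vM2 - vm2) - (vM1 - vm1)) * ∫ t in (0:ℝ)..T, |xd t|) ≤ C)
    ∧ ∀ L : ℝ,
        Tendsto (fun T : ℝ => T⁻¹ * ∫ t in (0:ℝ)..T, |xd t|) atTop (nhds L) →
        Tendsto (fun T : ℝ => T⁻¹ * ∫ t in (0:ℝ)..T, (vM t - vm t) * xd t) atTop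
            (nhds (1 / 2 * ((vM2 - vm2) - (vM1 - vm1)) * L))
          ∧ Tendsto (fun T : ℝ =>
              T⁻¹ * ∫ t in (0:ℝ)..T, ((n : ℝ) - 1) / (n : ℝ) * ((vM t - vm t) * xd t)) atTop
            (nhds (((n : ℝ) - 1) / (n : ℝ) * (1 / 2 * ((vM2 - vm2) - (vM1 - vm1)) * L))) := by
  have hc : 0 ≤ 1 / ((n : ℝ) * ((n : ℝ) - 1)) := by
    rcases n with _ | n
    · simp
    · rw [Nat.cast_succ, add_sub_cancel_right]
      positivity
  have hdyn : IsTwoStateDynamics _ vm1 vM1 vm2 vM2 vm vM S x xd := ⟨hstate, hSfin, hx, hode, hform⟩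
  have hbound := fun T (hT : 0 < T) => hdyn.abs_integral_width_mul_sub_le hc h1 h2 h12.le hx0 hT.le
  refine ⟨⟨_, by nlinarith, hbound⟩, fun L hL => ?_⟩
  have hmean := tendsto_inv_mul_of_abs_sub_le hL ((eventually_gt_atTop 0).mono hbound)
  refine ⟨hmean, ?_⟩
  convert hmean.const_mul (((n : ℝ) - 1) / n) using 2 with T
  rw [intervalIntegral.integral_const_mul, mul_left_comm]

/-- Exact two-state computation of the revenue difference: with two states
`(vm₁, vM₁)` and `(vm₂, vM₂)` (with `vm₁ < vm₂`), along the adaptive dynamics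
`∫_0^T Δv(t) x'(t) dt` equals `(1/2)(Δv₂ - Δv₁) ∫_0^T |x'(t)| dt` up to a
constant `C` independent of `T`; hence if the time-average path length tends to
`L`, the time-averaged revenue difference tends to
`((n-1)/n)·(1/2)(Δv₂ - Δv₁)·L` exactly. -/
theorem two_state_exact_revenue_difference (n : ℕ) (hn : 2 ≤ n)
    (vm1 vM1 vm2 vM2 : ℝ) (h1 : vm1 < vM1) (h2 : vm2 < vM2) (h12 : vm1 < vm2)
    (vm vM : ℝ → ℝ)
    (hstate : ∀ t, 0 ≤ t → (vm t = vm1 ∧ vM t = vM1) ∨ (vm t = vm2 ∧ vM t = vM2))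
    (S : Set ℝ)
    (hSfin : ∀ T : ℝ, (S ∩ Set.Icc 0 T).Finite)
    (hpc : ∀ t, 0 ≤ t → t ∉ S → ∀ᶠ s in nhds t, vm s = vm t ∧ vM s = vM t)
    (x xd : ℝ → ℝ)
    (hx : ContinuousOn x (Set.Ici 0))
    (hode : ∀ t, 0 ≤ t → t ∉ S → HasDerivAt x (xd t) t)
    (hform : ∀ t, 0 ≤ t → t ∉ S →
      xd t = -(1 / ((n : ℝ) * ((n : ℝ) - 1))) * ((x t - vm t) / (vM t - vm t)))
    (hx0 : x 0 ∈ Set.Icc vm1 vm2) :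
    (∃ C, 0 ≤ C ∧ ∀ T > (0 : ℝ),
        abs ((∫ t in (0:ℝ)..T, (vM t - vm t) * xd t)
            - 1 / 2 * ((vM2 - vm2) - (vM1 - vm1)) * ∫ t in (0:ℝ)..T, |xd t|) ≤ C)
    ∧ ∀ L : ℝ,
        Tendsto (fun T : ℝ => T⁻¹ * ∫ t in (0:ℝ)..T, |xd t|) atTop (nhds L) →
        Tendsto (fun T : ℝ => T⁻¹ * ∫ t in (0:ℝ)..T, (vM t - vm t) * xd t) atTop
            (nhds (1 / 2 * ((vM2 - vm2) - (vM1 - vm1)) * L))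
          ∧ Tendsto (fun T : ℝ =>
              T⁻¹ * ∫ t in (0:ℝ)..T, ((n : ℝ) - 1) / (n : ℝ) * ((vM t - vm t) * xd t)) atTop
            (nhds (((n : ℝ) - 1) / (n : ℝ) * (1 / 2 * ((vM2 - vm2) - (vM1 - vm1)) * L))) :=
  two_state_exact_revenue_difference_general n vm1 vM1 vm2 vM2 h1 h2 h12 vm vM hstate S hSfin x xd
    hx hode hform hx0
end
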